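/- arXiv:1812.08276 — 8 statements merged into one kernel-verified Lean document; each statement's English description precedes it below -/
import Mathlib

section
/- Let G be a connected, locally finite graph that is k-almost-Euclidean, and let 1 ≤ p < ∞. Then the operator norm of the shift operator S on ℓ^p(G) equals k. -/
/-!
Upper bound: by the power-mean inequality `|Sf(u)|^p ≤ deg(u)^(p-1) ∑_{v ~ u} |f(v)|^p`, and
summing over `u` counts each `|f(v)|^p` exactly `deg(v) ≤ k` times, so `‖Sf‖_p^p ≤ k^p ‖f‖_p^p`.

Lower bound: test with the indicator of the ball `B(n+1)` of radius `n+1` around `o`. Its shift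
equals `k` at every vertex of `B(n)` of full degree, so any admissible constant `C` satisfies
`k^p (|B(n)| - #{v | deg v ≠ k}) ≤ C^p |B(n+1)|`. Since `|B(n)| = γ(0) + ⋯ + γ(n)`, the
almost-Euclidean condition gives `|B(n)| / |B(n+1)| → 1`, while `|B(n)| → ∞` because the graph
is infinite; hence `k ≤ C`.
-/

/-- The shift (adjacency) operator: `(Sf)(u) = ∑_{v ~ u} f(v)`. -/
noncomputable def shiftOp {V : Type*} (G : SimpleGraph V) (f : V → ℂ) (u : V) : ℂ :=
  ∑ᶠ v ∈ G.neighborSet u, f v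

/-- The degree of a vertex. -/
noncomputable def gdeg {V : Type*} (G : SimpleGraph V) (v : V) : ℕ :=
  (G.neighborSet v).ncard

/-- Membership in ℓ^p: `∑_{v} |f(v)|^p < ∞`. -/
def memlp {V : Type*} (f : V → ℂ) (p : ℝ) : Prop :=
  Summable fun v => ‖f v‖ ^ p

/-- The ℓ^p norm: `(∑_{v} |f(v)|^p)^{1/p}`. -/
noncomputable def lpnorm {V : Type*} (f : V → ℂ) (p : ℝ) : ℝ :=
  (∑' v, ‖f v‖ ^ p) ^ (1 / p)

/-- `γ(n)`: the number of vertices at graph distance `n` from the distinguished vertex `o`. -/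
noncomputable def sphereCard {V : Type*} (G : SimpleGraph V) (o : V) (n : ℕ) : ℕ :=
  {v | G.dist o v = n}.ncard

open Filter Topology
open scoped ENNReal

section Lp

variable {V : Type*} {p : ℝ}

lemma memlp_iff_tsum_enorm_rpow_ne_top (f : V → ℂ) (hp : 0 ≤ p) :
    memlp f p ↔ ∑' v, ‖f v‖ₑ ^ p ≠ ⊤ :=
  ⟨fun hf => by
    simpa [← ofReal_norm, ENNReal.ofReal_rpow_of_nonneg, hp] using hf.tsum_ofReal_ne_top,
  fun hf => by simpa [memlp, ← ENNReal.toReal_rpow] using ENNReal.summable_toReal hf⟩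

lemma tsum_norm_rpow_eq_toReal (f : V → ℂ) (hp : 0 ≤ p) :
    ∑' v, ‖f v‖ ^ p = (∑' v, ‖f v‖ₑ ^ p).toReal := by
  rw [ENNReal.tsum_toReal_eq fun v => ENNReal.rpow_ne_top_of_nonneg hp enorm_ne_top]
  simp [← ENNReal.toReal_rpow]

lemma lpnorm_le_mul_lpnorm_iff {f g : V → ℂ} {C : ℝ} (hp : 0 < p) (hC : 0 ≤ C) :
    lpnorm g p ≤ C * lpnorm f p ↔ ∑' v, ‖g v‖ ^ p ≤ C ^ p * ∑' v, ‖f v‖ ^ p := by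
  have hf : 0 ≤ ∑' v, ‖f v‖ ^ p := tsum_nonneg fun v => by positivity
  have hg : 0 ≤ ∑' v, ‖g v‖ ^ p := tsum_nonneg fun v => by positivity
  rw [lpnorm, lpnorm, ← Real.rpow_le_rpow_iff (by positivity) (by positivity) hp,
    Real.mul_rpow hC (by positivity), one_div, Real.rpow_inv_rpow hg hp.ne',
    Real.rpow_inv_rpow hf hp.ne']

lemma tsum_norm_rpow_indicator_one {s : Set V} (hs : s.Finite) (hp : p ≠ 0) :
    ∑' v, ‖s.indicator (1 : V → ℂ) v‖ ^ p = s.ncard := by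
  rw [tsum_eq_sum (s := hs.toFinset) fun v hv => by simp_all [Real.zero_rpow hp],
    Set.ncard_eq_toFinset_card s hs, Finset.card_eq_sum_ones, Nat.cast_sum]
  refine Finset.sum_congr rfl fun v hv => ?_
  simp_all

lemma memlp_indicator_one {s : Set V} (hs : s.Finite) (hp : p ≠ 0) :
    memlp (s.indicator (1 : V → ℂ)) p :=
  summable_of_ne_finset_zero (s := hs.toFinset) fun v hv => by simp_all [Real.zero_rpow hp]

end Lp

lemma tendsto_sum_range_div_sum_range_succ {a : ℕ → ℝ} (ha : ∀ n, 0 ≤ a n) (ha₀ : 0 < a 0)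
    (h : Tendsto (fun n => (a n + a (n + 1)) / ∑ i ∈ Finset.range (n + 1), a i) atTop (𝓝 0)) :
    Tendsto (fun n => (∑ i ∈ Finset.range (n + 1), a i) / ∑ i ∈ Finset.range (n + 2), a i)
      atTop (𝓝 1) := by
  set s : ℕ → ℝ := fun n => ∑ i ∈ Finset.range (n + 1), a i
  have hs : ∀ n, 0 < s n := fun n =>
    ha₀.trans_le (Finset.single_le_sum (fun i _ => ha i) (by simp))
  have hsucc : ∀ n, s (n + 1) = s n + a (n + 1) := fun n => Finset.sum_range_succ _ _
  have hgap : Tendsto (fun n => a (n + 1) / s (n + 1)) atTop (𝓝 0) := by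
    refine squeeze_zero (fun n => div_nonneg (ha _) (hs _).le) (fun n => ?_) h
    rw [hsucc]
    exact div_le_div₀ (by linarith [ha n, ha (n + 1)]) (by linarith [ha n]) (hs n)
      (by linarith [ha (n + 1)])
  have hratio : ∀ n, s n / s (n + 1) = 1 - a (n + 1) / s (n + 1) := fun n => by
    rw [eq_sub_iff_add_eq, ← add_div, ← hsucc, div_self (hs _).ne']
  simpa only [sub_zero, ← hratio] using (tendsto_const_nhds (x := (1 : ℝ))).sub hgap

namespace SimpleGraph

section Balls

variable {V : Type*} (G : SimpleGraph V)

def closedBall (o : V) (n : ℕ) : Set V := {v | G.dist o v ≤ n}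

variable {G} {o : V}

@[simp]
lemma mem_closedBall {v : V} {n : ℕ} : v ∈ G.closedBall o n ↔ G.dist o v ≤ n := Iff.rfl

lemma closedBall_mono : Monotone (G.closedBall o) :=
  fun _ _ hmn _ hv => le_trans hv (by exact_mod_cast hmn)

lemma exists_adj_dist_le_of_dist_eq_succ {v : V} {n : ℕ} (h : G.dist o v = n + 1) :
    ∃ u, G.Adj u v ∧ G.dist o u ≤ n := by
  obtain ⟨w, hw⟩ :=
    (Reachable.of_dist_ne_zero (by omega : G.dist o v ≠ 0)).exists_walk_length_eq_dist
  have hnil : ¬ w.Nil := by rw [← Walk.length_eq_zero_iff]; omega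
  refine ⟨w.penultimate, Walk.adj_penultimate hnil, ?_⟩
  have := G.dist_le w.dropLast
  simp only [Walk.dropLast, Walk.take_length] at this
  omega

lemma Connected.finite_closedBall [G.LocallyFinite] (hconn : G.Connected) (o : V) (n : ℕ) :
    (G.closedBall o n).Finite := by
  induction n with
  | zero =>
    refine (Set.finite_singleton o).subset fun v hv => ?_
    simpa [hconn.dist_eq_zero_iff, eq_comm] using hv
  | succ n ih =>
    refine (ih.union (ih.biUnion fun u _ => (G.neighborSet u).toFinite)).subset fun v hv => ?_
    rcases (mem_closedBall.1 hv).lt_or_eq with hlt | heq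
    · exact Or.inl (mem_closedBall.2 (by omega))
    · obtain ⟨u, hadj, hu⟩ := exists_adj_dist_le_of_dist_eq_succ heq
      exact Or.inr (Set.mem_biUnion (mem_closedBall.2 hu) hadj)

lemma ncard_closedBall_succ (hfin : ∀ n, (G.closedBall o n).Finite) (n : ℕ) :
    (G.closedBall o (n + 1)).ncard = (G.closedBall o n).ncard + sphereCard G o (n + 1) := by
  have hsplit : G.closedBall o (n + 1) = G.closedBall o n ∪ {v | G.dist o v = n + 1} := by
    ext v; simp only [mem_closedBall, Set.mem_union, Set.mem_ofPred_eq]; omega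
  have hdisj : Disjoint (G.closedBall o n) {v | G.dist o v = n + 1} :=
    Set.disjoint_left.2 fun v h1 h2 => by simp_all
  rw [hsplit, Set.ncard_union_eq hdisj (hfin n) ((hfin (n + 1)).subset (by simp [hsplit])),
    sphereCard]

lemma ncard_closedBall_eq_sum (hfin : ∀ n, (G.closedBall o n).Finite) (n : ℕ) :
    (G.closedBall o n).ncard = ∑ i ∈ Finset.range (n + 1), sphereCard G o i := by
  induction n with
  | zero => simp [closedBall, sphereCard]
  | succ n ih => rw [ncard_closedBall_succ hfin, ih, Finset.sum_range_succ _ (n + 1)]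

lemma Connected.tendsto_ncard_closedBall_atTop [Infinite V] [G.LocallyFinite]
    (hconn : G.Connected) (o : V) :
    Tendsto (fun n => (G.closedBall o n).ncard) atTop atTop := by
  refine tendsto_atTop_atTop_of_monotone
    (fun m n hmn => Set.ncard_le_ncard (closedBall_mono hmn) (hconn.finite_closedBall o n))
    fun b => ?_
  obtain ⟨s, hs⟩ := Infinite.exists_subset_card_eq V b
  refine ⟨s.sup (G.dist o), hs ▸ ?_⟩
  rw [← Set.ncard_coe_finset]
  exact Set.ncard_le_ncard (fun v hv => Finset.le_sup (f := G.dist o) hv)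
    (hconn.finite_closedBall o _)

lemma Connected.ncard_closedBall_pos [G.LocallyFinite] (hconn : G.Connected) (o : V) (n : ℕ) :
    0 < (G.closedBall o n).ncard :=
  (Set.ncard_pos (hconn.finite_closedBall o n)).2 ⟨o, by simp⟩

lemma Connected.tendsto_ncard_closedBall_sub_div_succ [Infinite V] [G.LocallyFinite]
    (hconn : G.Connected)
    (heuc : Tendsto (fun n => ((sphereCard G o n : ℝ) + (sphereCard G o (n + 1) : ℝ)) /
      ∑ i ∈ Finset.range (n + 1), (sphereCard G o i : ℝ)) atTop (𝓝 0)) (c : ℝ) :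
    Tendsto (fun n => (((G.closedBall o n).ncard : ℝ) - c) / (G.closedBall o (n + 1)).ncard)
      atTop (𝓝 1) := by
  have hfin := hconn.finite_closedBall o
  have hball (n : ℕ) : ((G.closedBall o n).ncard : ℝ) =
      ∑ i ∈ Finset.range (n + 1), (sphereCard G o i : ℝ) := by
    exact_mod_cast ncard_closedBall_eq_sum hfin n
  have hcentre : 0 < (sphereCard G o 0 : ℝ) := by
    rw [← Finset.sum_range_one (fun i => (sphereCard G o i : ℝ)), ← hball 0]
    exact_mod_cast hconn.ncard_closedBall_pos o 0
  have hratio := tendsto_sum_range_div_sum_range_succ (fun n => Nat.cast_nonneg _) hcentre heuc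
  have hsmall : Tendsto (fun n => c / (G.closedBall o (n + 1)).ncard) atTop (𝓝 0) :=
    tendsto_const_nhds.div_atTop <| (tendsto_natCast_atTop_atTop.comp
      (hconn.tendsto_ncard_closedBall_atTop o)).comp (tendsto_add_atTop_nat 1)
  simpa [sub_div, hball] using hratio.sub hsmall

end Balls

section Shift

variable {V : Type*} (G : SimpleGraph V) [G.LocallyFinite]

lemma shiftOp_eq_sum (f : V → ℂ) (u : V) : shiftOp G f u = ∑ v ∈ G.neighborFinset u, f v :=
  finsum_mem_eq_toFinset_sum f _

lemma gdeg_eq_degree (v : V) : gdeg G v = G.degree v := by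
  rw [gdeg, Set.ncard_eq_toFinset_card', ← card_neighborFinset_eq_degree, neighborFinset]

lemma tsum_sum_neighborFinset (a : V → ℝ≥0∞) :
    ∑' u, ∑ v ∈ G.neighborFinset u, a v = ∑' v, G.degree v * a v := by
  have hsum (u : V) (b : V → ℝ≥0∞) :
      ∑ v ∈ G.neighborFinset u, b v = ∑' v, (G.neighborSet u).indicator b v := by
    rw [← coe_neighborFinset, ← tsum_subtype, Finset.tsum_subtype']
  have hswap (u v : V) :
      (G.neighborSet u).indicator a v = (G.neighborSet v).indicator (fun _ => a v) u := by
    by_cases h : G.Adj u v <;> simp [Set.indicator, h, G.adj_comm v u]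
  simp_rw [hsum, hswap]
  rw [ENNReal.tsum_comm]
  simp_rw [← hsum, Finset.sum_const, card_neighborFinset_eq_degree, nsmul_eq_mul]

variable {G}

lemma enorm_shiftOp_rpow_le (f : V → ℂ) (u : V) {p : ℝ} (hp : 1 ≤ p) :
    ‖shiftOp G f u‖ₑ ^ p ≤ (G.degree u : ℝ≥0∞) ^ (p - 1) * ∑ v ∈ G.neighborFinset u, ‖f v‖ₑ ^ p :=
  calc ‖shiftOp G f u‖ₑ ^ p ≤ (∑ v ∈ G.neighborFinset u, ‖f v‖ₑ) ^ p := by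
        rw [shiftOp_eq_sum]
        exact ENNReal.rpow_le_rpow (enorm_sum_le _ _) (by linarith)
    _ ≤ _ := by
        rw [← card_neighborFinset_eq_degree]
        exact ENNReal.rpow_sum_le_const_mul_sum_rpow _ _ hp

lemma tsum_enorm_shiftOp_rpow_le {k : ℕ} (hdeg : ∀ v, G.degree v ≤ k) (f : V → ℂ) {p : ℝ}
    (hp : 1 ≤ p) : ∑' u, ‖shiftOp G f u‖ₑ ^ p ≤ (k : ℝ≥0∞) ^ p * ∑' v, ‖f v‖ₑ ^ p := by
  have hk : (k : ℝ≥0∞) ^ (p - 1) * k = k ^ p := by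
    simpa using
      (ENNReal.rpow_add_of_nonneg (x := (k : ℝ≥0∞)) (p - 1) 1 (by linarith) zero_le_one).symm
  calc ∑' u, ‖shiftOp G f u‖ₑ ^ p
      ≤ ∑' u, (k : ℝ≥0∞) ^ (p - 1) * ∑ v ∈ G.neighborFinset u, ‖f v‖ₑ ^ p :=
        ENNReal.tsum_le_tsum fun u => (enorm_shiftOp_rpow_le f u hp).trans <| by
          gcongr
          exact hdeg u
    _ = (k : ℝ≥0∞) ^ (p - 1) * ∑' v, G.degree v * ‖f v‖ₑ ^ p := by
        rw [ENNReal.tsum_mul_left, tsum_sum_neighborFinset]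
    _ ≤ (k : ℝ≥0∞) ^ (p - 1) * ∑' v, k * ‖f v‖ₑ ^ p := by gcongr with v; exact hdeg v
    _ = (k : ℝ≥0∞) ^ p * ∑' v, ‖f v‖ₑ ^ p := by
        rw [ENNReal.tsum_mul_left, ← mul_assoc, hk]

theorem memlp_shiftOp_and_lpnorm_le {k : ℕ} (hdeg : ∀ v, G.degree v ≤ k)
    {p : ℝ} (hp : 1 ≤ p) {f : V → ℂ} (hf : memlp f p) :
    memlp (shiftOp G f) p ∧ lpnorm (shiftOp G f) p ≤ k * lpnorm f p := by
  have hp0 : 0 < p := by linarith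
  have hbound := tsum_enorm_shiftOp_rpow_le hdeg f hp
  have hfin : (k : ℝ≥0∞) ^ p * ∑' v, ‖f v‖ₑ ^ p ≠ ⊤ :=
    ENNReal.mul_ne_top (ENNReal.rpow_ne_top_of_nonneg hp0.le (ENNReal.natCast_ne_top k))
      ((memlp_iff_tsum_enorm_rpow_ne_top f hp0.le).1 hf)
  refine ⟨(memlp_iff_tsum_enorm_rpow_ne_top _ hp0.le).2 (ne_top_of_le_ne_top hfin hbound), ?_⟩
  rw [lpnorm_le_mul_lpnorm_iff hp0 k.cast_nonneg, tsum_norm_rpow_eq_toReal _ hp0.le,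
    tsum_norm_rpow_eq_toReal _ hp0.le]
  simpa [ENNReal.toReal_mul, ← ENNReal.toReal_rpow] using ENNReal.toReal_mono hfin hbound

variable {o : V}

lemma Connected.shiftOp_indicator_closedBall (hconn : G.Connected) {n : ℕ} {u : V}
    (hu : u ∈ G.closedBall o n) :
    shiftOp G ((G.closedBall o (n + 1)).indicator 1) u = gdeg G u := by
  have hnbr : G.neighborSet u ⊆ G.closedBall o (n + 1) := fun v huv => by
    have := hconn.dist_triangle (u := o) (v := u) (w := v)
    rw [dist_eq_one_iff_adj.2 huv] at this
    simp only [mem_closedBall] at hu ⊢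
    omega
  rw [shiftOp_eq_sum, gdeg_eq_degree, ← card_neighborFinset_eq_degree, Finset.card_eq_sum_ones,
    Nat.cast_sum]
  refine Finset.sum_congr rfl fun v hv => ?_
  simp [Set.indicator_of_mem (hnbr (by simpa using hv))]

lemma Connected.rpow_mul_ncard_closedBall_sub_le (hconn : G.Connected)
    {k : ℕ} (hcof : {v | gdeg G v ≠ k}.Finite) {p C : ℝ} (hp : 0 < p) (hC0 : 0 ≤ C)
    (hC : ∀ f : V → ℂ, memlp f p →
      memlp (shiftOp G f) p ∧ lpnorm (shiftOp G f) p ≤ C * lpnorm f p) (n : ℕ) :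
    (k : ℝ) ^ p * ((G.closedBall o n).ncard - {v | gdeg G v ≠ k}.ncard) ≤
      C ^ p * (G.closedBall o (n + 1)).ncard := by
  have hfin := hconn.finite_closedBall o
  set f := (G.closedBall o (n + 1)).indicator (1 : V → ℂ)
  obtain ⟨hSf, hle⟩ := hC f (memlp_indicator_one (hfin _) hp.ne')
  set A := G.closedBall o n ∩ {v | gdeg G v = k}
  have hA : A.Finite := (hfin n).inter_of_left _
  have hcard : ((G.closedBall o n).ncard : ℝ) - {v | gdeg G v ≠ k}.ncard ≤ A.ncard := by
    have : (G.closedBall o n).ncard ≤ A.ncard + {v | gdeg G v ≠ k}.ncard :=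
      (Set.ncard_le_ncard (fun v hv => by by_cases h : gdeg G v = k <;> simp_all [A])
        (hA.union hcof)).trans (Set.ncard_union_le _ _)
    have := (Nat.cast_le (α := ℝ)).2 this
    push_cast at this
    linarith
  have hlow : (k : ℝ) ^ p * A.ncard ≤ ∑' u, ‖shiftOp G f u‖ ^ p :=
    calc (k : ℝ) ^ p * A.ncard = ∑ u ∈ hA.toFinset, ‖shiftOp G f u‖ ^ p := by
          rw [Set.ncard_eq_toFinset_card _ hA, mul_comm, ← nsmul_eq_mul, ← Finset.sum_const]
          refine Finset.sum_congr rfl fun u hu => ?_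
          simp only [Set.Finite.mem_toFinset, A, Set.mem_inter_iff, Set.mem_ofPred_eq] at hu
          rw [hconn.shiftOp_indicator_closedBall hu.1, hu.2, Complex.norm_natCast]
      _ ≤ _ := hSf.sum_le_tsum _ fun _ _ => by positivity
  have hup := (lpnorm_le_mul_lpnorm_iff hp hC0).1 hle
  rw [tsum_norm_rpow_indicator_one (hfin _) hp.ne'] at hup
  calc _ ≤ (k : ℝ) ^ p * A.ncard := by gcongr
    _ ≤ _ := hlow.trans hup

end Shift

end SimpleGraph

theorem stmt3_general (V : Type*) [Infinite V] (G : SimpleGraph V)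
    (hconn : G.Connected) (hlf : ∀ v, (G.neighborSet v).Finite)
    (o : V) (k : ℕ)
    (hreg : ∀ v, gdeg G v ≤ k) (hcof : {v | gdeg G v ≠ k}.Finite)
    (heuc : Filter.Tendsto
      (fun n => ((sphereCard G o n : ℝ) + (sphereCard G o (n + 1) : ℝ)) /
        ∑ i ∈ Finset.range (n + 1), (sphereCard G o i : ℝ))
      Filter.atTop (nhds 0))
    (p : ℝ) (hp : 1 ≤ p) :
    IsLeast {C : ℝ | 0 ≤ C ∧ ∀ f : V → ℂ, memlp f p →
      memlp (shiftOp G f) p ∧ lpnorm (shiftOp G f) p ≤ C * lpnorm f p} (k : ℝ) := by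
  let : G.LocallyFinite := fun v => (hlf v).fintype
  have hp0 : 0 < p := by linarith
  refine ⟨⟨k.cast_nonneg, fun f hf => SimpleGraph.memlp_shiftOp_and_lpnorm_le
    (fun v => G.gdeg_eq_degree v ▸ hreg v) hp hf⟩, ?_⟩
  rintro C ⟨hC0, hC⟩
  have hlim := (hconn.tendsto_ncard_closedBall_sub_div_succ heuc
    ({v | gdeg G v ≠ k}.ncard : ℝ)).const_mul ((k : ℝ) ^ p)
  rw [mul_one] at hlim
  have hkC : (k : ℝ) ^ p ≤ C ^ p := le_of_tendsto hlim <| Eventually.of_forall fun n => by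
    rw [← mul_div_assoc, div_le_iff₀ (by exact_mod_cast hconn.ncard_closedBall_pos o (n + 1))]
    exact hconn.rpow_mul_ncard_closedBall_sub_le hcof hp0 hC0 hC n
  exact (Real.rpow_le_rpow_iff k.cast_nonneg hC0 hp0).1 hkC

/-- If `G` is a connected, locally finite, `k`-almost-Euclidean graph
and `1 ≤ p < ∞`, then the operator norm of the shift on `ℓ^p(G)` equals `k`
(expressed as: `k` is the least constant `C ≥ 0` such that `S` maps `ℓ^p(G)` into
itself with `‖Sf‖_p ≤ C‖f‖_p`). -/
theorem stmt3 (V : Type*) [Countable V] [Infinite V] (G : SimpleGraph V)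
    (hconn : G.Connected) (hlf : ∀ v, (G.neighborSet v).Finite)
    (o : V) (k : ℕ)
    (hreg : ∀ v, gdeg G v ≤ k) (hcof : {v | gdeg G v ≠ k}.Finite)
    (heuc : Filter.Tendsto
      (fun n => ((sphereCard G o n : ℝ) + (sphereCard G o (n + 1) : ℝ)) /
        ∑ i ∈ Finset.range (n + 1), (sphereCard G o i : ℝ))
      Filter.atTop (nhds 0))
    (p : ℝ) (hp : 1 ≤ p) :
    IsLeast {C : ℝ | 0 ≤ C ∧ ∀ f : V → ℂ, memlp f p →
      memlp (shiftOp G f) p ∧ lpnorm (shiftOp G f) p ≤ C * lpnorm f p} (k : ℝ) :=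
  stmt3_general V G hconn hlf o k hreg hcof heuc p hp
end

section
/- Let T be a leafless rooted tree of bounded degree, and let M and m be the essential maximum and minimum branching numbers of T. Suppose either M = 1 and 1 ≤ p < ∞, or M > 1 and 1 ≤ p ≤ log_M(m) + 1. Then the kernel of the shift operator on ℓ^p(T) is trivial: the only f ∈ ℓ^p(T) with Sf = 0 is f = 0. -/
/-- The children of a vertex `v` of the tree `T` rooted at `o`: the neighbors of `v`
that are one step farther from the root than `v`. -/
def children {V : Type*} (T : SimpleGraph V) (o v : V) : Set V :=
  {u | T.Adj v u ∧ T.dist o u = T.dist o v + 1}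

/-- `β(v)`: the number of children of `v`. -/
noncomputable def br {V : Type*} (T : SimpleGraph V) (o v : V) : ℕ :=
  (children T o v).ncard

/-- The set `𝓜` of vertices whose branching number is attained infinitely often. -/
def essSet {V : Type*} (T : SimpleGraph V) (o : V) : Set V :=
  {v | {w | br T o w = br T o v}.Infinite}


open SimpleGraph

section TreeAux
variable {V : Type*} {T : SimpleGraph V}

lemma path_length_eq_dist (htree : T.IsTree) {a b : V} (P : T.Walk a b) (hP : P.IsPath) :
    P.length = T.dist a b := by
  obtain ⟨Q, hQ, hQl⟩ := htree.isConnected.exists_path_of_dist a b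
  rw [(htree.existsUnique_path a b).unique hP hQ, hQl]

lemma adj_dist (htree : T.IsTree) (o : V) {u x : V} (h : T.Adj u x) :
    T.dist o x = T.dist o u + 1 ∨ T.dist o u = T.dist o x + 1 := by
  classical
  have hd1 : T.dist u x = 1 := dist_eq_one_iff_adj.2 h
  have hd2 : T.dist x u = 1 := dist_eq_one_iff_adj.2 h.symm
  have h1 : T.dist o x ≤ T.dist o u + 1 := by
    have := htree.isConnected.dist_triangle (u := o) (v := u) (w := x)
    omega
  have h2 : T.dist o u ≤ T.dist o x + 1 := by
    have := htree.isConnected.dist_triangle (u := o) (v := x) (w := u)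
    omega
  have hne : T.dist o x ≠ T.dist o u := by
    intro heq
    obtain ⟨Q, hQ, hQl⟩ := htree.isConnected.exists_path_of_dist o u
    by_cases hx : x ∈ Q.support
    · have e1 : (Q.takeUntil x hx).length = T.dist o x :=
        path_length_eq_dist htree _ (hQ.takeUntil hx)
      have e2 := congrArg Walk.length (Q.take_spec hx)
      rw [Walk.length_append] at e2
      have e3 : (Q.dropUntil x hx).length = 0 := by omega
      exact h.ne (Walk.eq_of_length_eq_zero e3).symm
    · have hWp : (Q.concat h).IsPath := by
        rw [← Walk.isPath_reverse_iff, Walk.reverse_concat, Walk.cons_isPath_iff]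
        refine ⟨hQ.reverse, ?_⟩
        rw [Walk.support_reverse, List.mem_reverse]
        exact hx
      have := path_length_eq_dist htree _ hWp
      rw [Walk.length_concat] at this
      omega
  omega

lemma parent_unique (htree : T.IsTree) (o : V) {u v x : V}
    (hv : T.Adj v u) (hx : T.Adj x u)
    (hdv : T.dist o v + 1 = T.dist o u) (hdx : T.dist o x + 1 = T.dist o u) : v = x := by
  obtain ⟨Qv, hQv, hQvl⟩ := htree.isConnected.exists_path_of_dist o v
  obtain ⟨Qx, hQx, hQxl⟩ := htree.isConnected.exists_path_of_dist o x
  have hWv : (Qv.concat hv).IsPath :=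
    Walk.isPath_of_length_eq_dist _ (by rw [Walk.length_concat, hQvl]; omega)
  have hWx : (Qx.concat hx).IsPath :=
    Walk.isPath_of_length_eq_dist _ (by rw [Walk.length_concat, hQxl]; omega)
  have he := (htree.existsUnique_path o u).unique hWv hWx
  obtain ⟨hv', -⟩ := Walk.concat_inj he
  exact hv'

end TreeAux
section ChildAux
variable {V : Type*} {T : SimpleGraph V}

lemma children_subset_nbhd (o v : V) : children T o v ⊆ T.neighborSet v :=
  fun _ hu => hu.1

lemma children_finite (hlf : ∀ v, (T.neighborSet v).Finite) (o v : V) :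
    (children T o v).Finite := (hlf v).subset (children_subset_nbhd o v)

lemma child_dist {o v u : V} (hu : u ∈ children T o v) :
    T.dist o u = T.dist o v + 1 := hu.2

lemma child_unique (htree : T.IsTree) {o v v' u : V}
    (hu : u ∈ children T o v) (hu' : u ∈ children T o v') : v = v' :=
  parent_unique htree o hu.1 hu'.1 hu.2.symm hu'.2.symm

lemma not_self_mem_children {o v u : V} (hu : u ∈ children T o v) :
    v ∉ children T o u := by
  intro hc
  have h1 := hu.2
  have h2 := hc.2
  omega

lemma nbhd_child (htree : T.IsTree) {o v u : V} (hu : u ∈ children T o v) :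
    T.neighborSet u = insert v (children T o u) := by
  ext x
  constructor
  · intro hx
    rcases adj_dist htree o (hx : T.Adj u x) with h1 | h2
    · exact Set.mem_insert_iff.2 (Or.inr ⟨hx, h1⟩)
    · have : x = v := by
        refine parent_unique htree o (hx : T.Adj u x).symm hu.1 (by omega)
          hu.2.symm
      exact Set.mem_insert_iff.2 (Or.inl this)
  · intro hx
    rcases Set.mem_insert_iff.1 hx with rfl | hx
    · exact hu.1.symm
    · exact hx.1

end ChildAux
section AnalyticAux

lemma sum_rpow_le_card_rpow {ι : Type*} (s : Finset ι) (g : ι → ℝ)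
    (hg : ∀ i ∈ s, 0 ≤ g i) {p : ℝ} (hp : 1 ≤ p) :
    (∑ i ∈ s, g i) ^ p ≤ (s.card : ℝ) ^ (p - 1) * ∑ i ∈ s, g i ^ p := by
  rcases Finset.eq_empty_or_nonempty s with rfl | hs
  · simp [Real.zero_rpow (by linarith : p ≠ 0)]
  have hn : (0:ℝ) < s.card := by
    exact_mod_cast Finset.card_pos.2 hs
  have key := Real.rpow_arith_mean_le_arith_mean_rpow s (fun _ => (s.card:ℝ)⁻¹) g
    (fun i _ => by positivity) (by
      rw [Finset.sum_const, nsmul_eq_mul]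
      field_simp) hg hp
  rw [← Finset.mul_sum, ← Finset.mul_sum,
    Real.mul_rpow (by positivity) (Finset.sum_nonneg hg),
    Real.inv_rpow hn.le] at key
  have hcp : (0:ℝ) < (s.card : ℝ) ^ p := Real.rpow_pos_of_pos hn p
  have h2 : (∑ i ∈ s, g i) ^ p ≤ (s.card:ℝ) ^ p * ((s.card:ℝ)⁻¹ * ∑ i ∈ s, g i ^ p) := by
    have := mul_le_mul_of_nonneg_left key hcp.le
    rwa [← mul_assoc, mul_inv_cancel₀ hcp.ne', one_mul] at this
  calc (∑ i ∈ s, g i) ^ p ≤ (s.card:ℝ) ^ p * ((s.card:ℝ)⁻¹ * ∑ i ∈ s, g i ^ p) := h2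
    _ = (s.card : ℝ) ^ (p - 1) * ∑ i ∈ s, g i ^ p := by
        rw [Real.rpow_sub hn, Real.rpow_one]
        ring

end AnalyticAux
section ShiftAux
variable {V : Type*} {T : SimpleGraph V}

lemma shift_eq (htree : T.IsTree) (hlf : ∀ v, (T.neighborSet v).Finite)
    {f : V → ℂ} {o v u : V} (hu : u ∈ children T o v)
    (hS : shiftOp T f u = 0) :
    f v = - ∑ c ∈ (children_finite hlf o u).toFinset, f c := by
  classical
  have hfin := children_finite hlf o u
  have hset : T.neighborSet u = ((insert v hfin.toFinset : Finset V) : Set V) := by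
    rw [nbhd_child htree hu]
    simp [Set.Finite.coe_toFinset]
  have hsplit : shiftOp T f u = ∑ c ∈ insert v hfin.toFinset, f c := by
    rw [shiftOp, hset, finsum_mem_coe_finset]
  rw [hsplit, Finset.sum_insert (by
    rw [Set.Finite.mem_toFinset]
    exact not_self_mem_children hu)] at hS
  linear_combination hS

lemma br_pos (hlf : ∀ v, (T.neighborSet v).Finite) (o : V)
    (hleafless : ∀ v, (children T o v).Nonempty) (v : V) :
    1 ≤ br T o v := by
  rw [br]
  exact (Set.ncard_pos (children_finite hlf o v)).2 (hleafless v)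

lemma br_le_deg (hlf : ∀ v, (T.neighborSet v).Finite) (o v : V) :
    br T o v ≤ gdeg T v :=
  Set.ncard_le_ncard (children_subset_nbhd o v) (hlf v)

lemma bad_finite (hlf : ∀ v, (T.neighborSet v).Finite) (o : V)
    (D : ℕ) (hD : ∀ v, gdeg T v ≤ D) :
    {v : V | v ∉ essSet T o}.Finite := by
  classical
  have hsub : {v : V | v ∉ essSet T o} ⊆
      ⋃ k : Fin (D + 1),
        (if h : ({w : V | br T o w = (k : ℕ)}).Finite then {w : V | br T o w = (k : ℕ)} else ∅) := by
    intro v hv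
    have hk : br T o v ≤ D := le_trans (br_le_deg hlf o v) (hD v)
    have hfin : ({w : V | br T o w = br T o v}).Finite := Set.not_infinite.1 hv
    refine Set.mem_iUnion.2 ⟨⟨br T o v, by omega⟩, ?_⟩
    simp only [Fin.val_mk]
    rw [dif_pos hfin]
    exact rfl
  refine Set.Finite.subset ?_ hsub
  refine Set.finite_iUnion fun k => ?_
  split_ifs with h
  · exact h
  · exact Set.finite_empty

end ShiftAux
/-- Let `T` be a leafless rooted tree of bounded degree, with essential
maximum and minimum branching numbers `M` and `m`. If `M = 1` and `1 ≤ p < ∞`, or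
`M > 1` and `1 ≤ p ≤ log_M(m) + 1`, then the kernel of the shift on `ℓ^p(T)` is
trivial. -/
theorem stmt7 (V : Type*) [Countable V] [Infinite V] (T : SimpleGraph V)
    (htree : T.IsTree) (hlf : ∀ v, (T.neighborSet v).Finite)
    (o : V) (hbdd : ∃ D : ℕ, ∀ v, gdeg T v ≤ D)
    (hleafless : ∀ v, (children T o v).Nonempty)
    (M m : ℕ)
    (hM : IsGreatest (br T o '' essSet T o) M)
    (hm : IsLeast (br T o '' essSet T o) m)
    (p : ℝ)
    (hp : (M = 1 ∧ 1 ≤ p) ∨ (1 < M ∧ 1 ≤ p ∧ p ≤ Real.logb M m + 1)) :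
    ∀ f : V → ℂ, memlp f p → (∀ u, shiftOp T f u = 0) → f = 0 := by
  classical
  intro f hf hS
  by_contra hne
  obtain ⟨w1, hw1⟩ : ∃ w, f w ≠ 0 := by
    by_contra h
    push_neg at h
    exact hne (funext fun v => h v)
  obtain ⟨D, hD⟩ := hbdd
  -- the set of "bad" vertices is finite and has bounded distance from the root
  have hbadfin := bad_finite (T := T) hlf o D hD
  obtain ⟨R, hR⟩ := (hbadfin.image (T.dist o)).bddAbove
  have hgood : ∀ v : V, R < T.dist o v → v ∈ essSet T o := by
    intro v hv
    by_contra hbad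
    have : T.dist o v ≤ R := hR (Set.mem_image_of_mem _ hbad)
    omega
  -- numeric facts
  have hp1 : 1 ≤ p := by rcases hp with ⟨_, h⟩ | ⟨_, h, _⟩ <;> exact h
  have hm1 : 1 ≤ m := by
    obtain ⟨v, hv, hbv⟩ := hm.1
    rw [← hbv]
    exact br_pos hlf o hleafless v
  have hMm : ((M:ℝ)) ^ (p - 1) ≤ (m:ℝ) := by
    rcases hp with ⟨hM1, _⟩ | ⟨hM1, _, hple⟩
    · rw [hM1]
      push_cast
      rw [Real.one_rpow]
      exact_mod_cast hm1
    · have hMr : (1:ℝ) < M := by exact_mod_cast hM1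
      have hmr : (0:ℝ) < m := by exact_mod_cast hm1
      calc ((M:ℝ)) ^ (p - 1) ≤ ((M:ℝ)) ^ Real.logb M m :=
            Real.rpow_le_rpow_of_exponent_le hMr.le (by linarith)
        _ = (m:ℝ) := Real.rpow_logb (by linarith) (ne_of_gt hMr) hmr
  -- finsets of children
  set cF : V → Finset V := fun u => (children_finite hlf o u).toFinset with hcF
  have hcF_mem : ∀ u c : V, c ∈ cF u ↔ c ∈ children T o u := by
    intro u c
    simp [hcF, Set.Finite.mem_toFinset]
  have hcF_card : ∀ u : V, (cF u).card = br T o u := by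
    intro u
    rw [br, Set.ncard_eq_toFinset_card _ (children_finite hlf o u)]
  set gF : V → Finset V := fun v => (cF v).biUnion cF with hgF
  -- the ℓ^p mass
  set a : V → ℝ := fun v => ‖f v‖ ^ p with ha
  have ha0 : ∀ v, 0 ≤ a v := fun v => Real.rpow_nonneg (norm_nonneg _) p
  -- per-child estimate
  have hstep1 : ∀ u, u ∈ essSet T o → ∀ v, u ∈ children T o v →
      a v ≤ (m:ℝ) * ∑ c ∈ cF u, a c := by
    intro u hu v huv
    have h1 : f v = -∑ c ∈ cF u, f c := shift_eq htree hlf huv (hS u)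
    have h2 : ‖f v‖ ≤ ∑ c ∈ cF u, ‖f c‖ := by
      rw [h1, norm_neg]
      exact norm_sum_le _ _
    have h3 : a v ≤ (∑ c ∈ cF u, ‖f c‖) ^ p :=
      Real.rpow_le_rpow (norm_nonneg _) h2 (by linarith)
    have h4 := sum_rpow_le_card_rpow (cF u) (fun c => ‖f c‖)
      (fun c _ => norm_nonneg _) hp1
    have hbr : br T o u ≤ M := hM.2 ⟨u, hu, rfl⟩
    have h5 : (((cF u).card : ℝ)) ^ (p - 1) ≤ (m:ℝ) := by
      refine le_trans ?_ hMm
      refine Real.rpow_le_rpow (by positivity) ?_ (by linarith)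
      rw [hcF_card u]
      exact_mod_cast hbr
    calc a v ≤ (∑ c ∈ cF u, ‖f c‖) ^ p := h3
      _ ≤ (((cF u).card : ℝ)) ^ (p - 1) * ∑ c ∈ cF u, ‖f c‖ ^ p := h4
      _ ≤ (m:ℝ) * ∑ c ∈ cF u, a c := by
          refine mul_le_mul_of_nonneg_right h5 ?_
          exact Finset.sum_nonneg fun c _ => Real.rpow_nonneg (norm_nonneg _) p
  -- global disjointness of children sets
  have hcdisj : ∀ u u' : V, u ≠ u' → Disjoint (cF u) (cF u') := by
    intro u u' huu
    rw [Finset.disjoint_left]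
    intro c hc hc'
    exact huu (child_unique htree ((hcF_mem u c).1 hc) ((hcF_mem u' c).1 hc'))
  have hgdisj : ∀ v v' : V, v ≠ v' → Disjoint (gF v) (gF v') := by
    intro v v' hvv
    rw [Finset.disjoint_left]
    intro c hc hc'
    obtain ⟨u, hu, hcu⟩ := Finset.mem_biUnion.1 hc
    obtain ⟨u', hu', hcu'⟩ := Finset.mem_biUnion.1 hc'
    have : u = u' := child_unique htree ((hcF_mem u c).1 hcu) ((hcF_mem u' c).1 hcu')
    subst this
    exact hvv (child_unique htree ((hcF_mem v u).1 hu) ((hcF_mem v' u).1 hu'))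
  -- per-vertex estimate for good vertices
  have hstep2 : ∀ v : V, R < T.dist o v → a v ≤ ∑ c ∈ gF v, a c := by
    intro v hv
    have hvess : v ∈ essSet T o := hgood v hv
    have hsum_eq : ∑ c ∈ gF v, a c = ∑ u ∈ cF v, ∑ c ∈ cF u, a c := by
      refine Finset.sum_biUnion ?_
      intro u hu u' hu' huu
      exact hcdisj u u' huu
    have hub : ∀ u ∈ cF v, a v ≤ (m:ℝ) * ∑ c ∈ cF u, a c := by
      intro u hu
      have hu' : u ∈ children T o v := (hcF_mem v u).1 hu
      have hud : T.dist o u = T.dist o v + 1 := hu'.2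
      have : u ∈ essSet T o := hgood u (by omega)
      exact hstep1 u this v hu'
    have hsum : ((br T o v : ℝ)) * a v ≤ (m:ℝ) * ∑ u ∈ cF v, ∑ c ∈ cF u, a c := by
      calc ((br T o v : ℝ)) * a v = ∑ _u ∈ cF v, a v := by
            rw [Finset.sum_const, nsmul_eq_mul, hcF_card]
        _ ≤ ∑ u ∈ cF v, (m:ℝ) * ∑ c ∈ cF u, a c := Finset.sum_le_sum hub
        _ = (m:ℝ) * ∑ u ∈ cF v, ∑ c ∈ cF u, a c := by rw [Finset.mul_sum]
    have hmbr : (m:ℝ) ≤ (br T o v : ℝ) := by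
      exact_mod_cast hm.2 ⟨v, hvess, rfl⟩
    have hmpos : (0:ℝ) < m := by exact_mod_cast hm1
    have hfin : (m:ℝ) * a v ≤ (m:ℝ) * ∑ u ∈ cF v, ∑ c ∈ cF u, a c :=
      le_trans (mul_le_mul_of_nonneg_right hmbr (ha0 v)) hsum
    rw [hsum_eq]
    exact le_of_mul_le_mul_left hfin hmpos
  -- nonzero values propagate downwards
  have hprop : ∀ w : V, f w ≠ 0 → ∃ w', f w' ≠ 0 ∧ T.dist o w' = T.dist o w + 2 := by
    intro w hw
    obtain ⟨u, hu⟩ := hleafless w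
    have h1 : f w = -∑ c ∈ cF u, f c := shift_eq htree hlf hu (hS u)
    have : ∃ c ∈ cF u, f c ≠ 0 := by
      by_contra hall
      push_neg at hall
      exact hw (by rw [h1, Finset.sum_eq_zero hall, neg_zero])
    obtain ⟨c, hc, hcne⟩ := this
    have hc' : c ∈ children T o u := (hcF_mem u c).1 hc
    exact ⟨c, hcne, by rw [hc'.2, hu.2]⟩
  have hdeep : ∀ n : ℕ, ∃ w', f w' ≠ 0 ∧ T.dist o w1 + 2 * n ≤ T.dist o w' := by
    intro n
    induction n with
    | zero => exact ⟨w1, hw1, by omega⟩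
    | succ k ih =>
      obtain ⟨w', hw', hd⟩ := ih
      obtain ⟨w'', hw'', hd'⟩ := hprop w' hw'
      exact ⟨w'', hw'', by omega⟩
  obtain ⟨w₀, hw₀ne, hw₀d⟩ := hdeep (R + 1)
  have hgood₀ : R < T.dist o w₀ := by omega
  -- the iterated grandchildren sets
  set FS : ℕ → Finset V := fun n => Nat.rec {w₀} (fun _ s => s.biUnion gF) n with hFS
  have hFS0 : FS 0 = {w₀} := rfl
  have hFSsucc : ∀ n, FS (n + 1) = (FS n).biUnion gF := fun n => rfl
  have hgF_dist : ∀ v c : V, c ∈ gF v → T.dist o c = T.dist o v + 2 := by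
    intro v c hc
    obtain ⟨u, hu, hcu⟩ := Finset.mem_biUnion.1 hc
    have h1 := ((hcF_mem v u).1 hu).2
    have h2 := ((hcF_mem u c).1 hcu).2
    omega
  have inv1 : ∀ n, ∀ v ∈ FS n, T.dist o v = T.dist o w₀ + 2 * n := by
    intro n
    induction n with
    | zero => intro v hv; rw [hFS0] at hv; rw [Finset.mem_singleton.1 hv]; ring_nf
    | succ k ih =>
      intro v hv
      rw [hFSsucc] at hv
      obtain ⟨u, hu, hvu⟩ := Finset.mem_biUnion.1 hv
      have := hgF_dist u v hvu
      have := ih u hu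
      omega
  have inv2 : ∀ n, a w₀ ≤ ∑ v ∈ FS n, a v := by
    intro n
    induction n with
    | zero => rw [hFS0, Finset.sum_singleton]
    | succ k ih =>
      refine le_trans ih ?_
      rw [hFSsucc, Finset.sum_biUnion (fun v _ v' _ hvv => hgdisj v v' hvv)]
      refine Finset.sum_le_sum ?_
      intro v hv
      have hd := inv1 k v hv
      exact hstep2 v (by omega)
  -- contradiction with summability
  have haw₀ : 0 < a w₀ := Real.rpow_pos_of_pos (norm_pos_iff.2 hw₀ne) p
  have hbound : ∀ N : ℕ, (N : ℝ) * a w₀ ≤ ∑' v, a v := by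
    intro N
    have hdisjFS : ∀ n n' : ℕ, n ≠ n' → Disjoint (FS n) (FS n') := by
      intro n n' hnn
      rw [Finset.disjoint_left]
      intro v hv hv'
      have := inv1 n v hv
      have := inv1 n' v hv'
      omega
    have hUN : ∑ v ∈ (Finset.range N).biUnion FS, a v = ∑ n ∈ Finset.range N, ∑ v ∈ FS n, a v :=
      Finset.sum_biUnion (fun n _ n' _ hnn => hdisjFS n n' hnn)
    have h1 : (N : ℝ) * a w₀ ≤ ∑ v ∈ (Finset.range N).biUnion FS, a v := by
      rw [hUN]
      calc (N : ℝ) * a w₀ = ∑ _n ∈ Finset.range N, a w₀ := by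
            rw [Finset.sum_const, Finset.card_range, nsmul_eq_mul]
        _ ≤ ∑ n ∈ Finset.range N, ∑ v ∈ FS n, a v := Finset.sum_le_sum fun n _ => inv2 n
    refine le_trans h1 ?_
    exact Summable.sum_le_tsum _ (fun v _ => ha0 v) hf
  obtain ⟨N, hN⟩ := exists_nat_gt ((∑' v, a v) / a w₀)
  have : (∑' v, a v) < (N : ℝ) * a w₀ := by
    rw [div_lt_iff₀ haw₀] at hN
    linarith
  exact absurd (hbound N) (not_le.2 this)
end

section
/- Let M ≥ m ≥ 1 be integers and let T be the rooted tree in which the root and every vertex at even distance from the root has exactly m children, while every vertex at odd distance from the root has exactly M children. If M > 1 and log_M(m) + 1 < p < ∞, then the kernel of the shift operator on ℓ^p(T) is nontrivial; and for any M ≥ 1 the kernel of the shift operator on ℓ^∞(T) is nontrivial. In fact, the function f defined by f(v) = (−M)^{−|v|/2} when |v| is even and f(v) = 0 when |v| is odd is a nonzero element of the corresponding space satisfying Sf = 0. -/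
open SimpleGraph in
/-- In a tree, the length of any path equals the distance between its endpoints. -/
lemma tree_walk_len {V : Type*} {T : SimpleGraph V} (ht : T.IsTree) {a b : V}
    {p : T.Walk a b} (hp : p.IsPath) : p.length = T.dist a b := by
  obtain ⟨q, hq, hql⟩ := ht.isConnected.exists_path_of_dist a b
  rwa [(ht.existsUnique_path a b).unique hq hp] at hql

open SimpleGraph in
/-- In a tree, adjacent vertices have distances from the root differing by exactly one. -/
lemma tree_adj_dist {V : Type*} {T : SimpleGraph V} (ht : T.IsTree) (o : V) {u v : V}
    (h : T.Adj u v) :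
    T.dist o v = T.dist o u + 1 ∨ T.dist o u = T.dist o v + 1 := by
  classical
  obtain ⟨p, hp, hpl⟩ := ht.isConnected.exists_path_of_dist o u
  by_cases hv : v ∈ p.support
  · right
    have h1 : (p.takeUntil v hv).length = T.dist o v := tree_walk_len ht (hp.takeUntil hv)
    have h2 : (p.dropUntil v hv).length = T.dist v u := tree_walk_len ht (hp.dropUntil hv)
    have h3 : (p.takeUntil v hv).length + (p.dropUntil v hv).length = p.length := by
      rw [← Walk.length_append, Walk.take_spec]
    have h4 : T.dist v u = 1 := SimpleGraph.dist_eq_one_iff_adj.mpr h.symm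
    omega
  · left
    have hc : (p.concat h).IsPath := by
      rw [← Walk.isPath_reverse_iff, Walk.reverse_concat]
      exact hp.reverse.cons (by simpa [Walk.support_reverse] using hv)
    have hlen := tree_walk_len ht hc
    rw [Walk.length_concat, hpl] at hlen
    omega

open SimpleGraph in
lemma walk_cons_of_pos {V : Type*} {G : SimpleGraph V} {u o : V} (p : G.Walk u o)
    (h : 0 < p.length) : ∃ (w : V) (ha : G.Adj u w) (q : G.Walk w o), p = Walk.cons ha q := by
  cases p with
  | nil => simp at h
  | cons ha q => exact ⟨_, ha, q, rfl⟩

open SimpleGraph in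
/-- In a connected graph, every vertex at distance `n+1` from the root has a parent. -/
lemma tree_parent_exists {V : Type*} {T : SimpleGraph V} (ht : T.IsTree) (o : V) {u : V} {n : ℕ}
    (hd : T.dist o u = n + 1) : ∃ w, T.Adj u w ∧ T.dist o w = n := by
  obtain ⟨p, hp, hpl⟩ := ht.isConnected.exists_path_of_dist o u
  have hql : p.reverse.length = n + 1 := by rw [Walk.length_reverse]; omega
  obtain ⟨w, ha, q, hq⟩ := walk_cons_of_pos p.reverse (by omega)
  refine ⟨w, ha, ?_⟩
  have hqp : q.IsPath := by
    have := hp.reverse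
    rw [hq] at this
    exact this.of_cons
  have hlen : q.length = T.dist w o := tree_walk_len ht hqp
  rw [hq, Walk.length_cons] at hql
  rw [T.dist_comm]
  omega

open SimpleGraph in
/-- In a tree, the parent is unique. -/
lemma tree_parent_unique {V : Type*} {T : SimpleGraph V} (ht : T.IsTree) (o : V)
    {u w₁ w₂ : V} {n : ℕ} (hd : T.dist o u = n + 1)
    (h1 : T.Adj u w₁) (hd1 : T.dist o w₁ = n)
    (h2 : T.Adj u w₂) (hd2 : T.dist o w₂ = n) : w₁ = w₂ := by
  classical
  obtain ⟨p₁, hp₁, hl₁⟩ := ht.isConnected.exists_path_of_dist o w₁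
  obtain ⟨p₂, hp₂, hl₂⟩ := ht.isConnected.exists_path_of_dist o w₂
  have hu : ∀ (w : V) (p : T.Walk o w), p.IsPath → p.length = n → u ∉ p.support := by
    intro w p hp hl hmem
    have ha : (p.takeUntil u hmem).length = T.dist o u := tree_walk_len ht (hp.takeUntil hmem)
    have hb := Walk.length_takeUntil_le p hmem
    omega
  have hq₁ : (p₁.concat h1.symm).IsPath := by
    rw [← Walk.isPath_reverse_iff, Walk.reverse_concat]
    exact hp₁.reverse.cons
      (by simpa [Walk.support_reverse] using hu _ p₁ hp₁ (by omega))
  have hq₂ : (p₂.concat h2.symm).IsPath := by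
    rw [← Walk.isPath_reverse_iff, Walk.reverse_concat]
    exact hp₂.reverse.cons
      (by simpa [Walk.support_reverse] using hu _ p₂ hp₂ (by omega))
  have heq := (ht.existsUnique_path o u).unique hq₁ hq₂
  obtain ⟨hv, -⟩ := Walk.concat_inj heq
  exact hv

open SimpleGraph in
/-- Level sets of the tree are finite, with cardinality bounded by the product of
branching numbers. -/
lemma tree_levels {V : Type*} {T : SimpleGraph V} (ht : T.IsTree)
    (hlf : ∀ v, (T.neighborSet v).Finite) (o : V) (m M : ℕ)
    (hbr : ∀ v, (Even (T.dist o v) → br T o v = m) ∧ (Odd (T.dist o v) → br T o v = M)) :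
    ∀ n : ℕ, ∃ s : Finset V, (∀ v, v ∈ s ↔ T.dist o v = n) ∧
      s.card ≤ m ^ ((n + 1) / 2) * M ^ (n / 2) := by
  classical
  intro n
  induction n with
  | zero =>
    refine ⟨{o}, fun v => ?_, by simp⟩
    simp only [Finset.mem_singleton]
    constructor
    · rintro rfl; exact T.dist_self
    · intro h
      exact (ht.isConnected.dist_eq_zero_iff.mp h).symm
  | succ n ih =>
    obtain ⟨s, hs, hcard⟩ := ih
    have hchfin : ∀ v : V, (children T o v).Finite := fun v =>
      (hlf v).subset fun x hx => hx.1
    set ch : V → Finset V := fun v => (hchfin v).toFinset with hch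
    refine ⟨(s.biUnion ch).filter (fun v => T.dist o v = n + 1), fun v => ?_, ?_⟩
    · simp only [Finset.mem_filter, Finset.mem_biUnion]
      constructor
      · rintro ⟨-, h⟩; exact h
      · intro h
        obtain ⟨w, hadj, hwd⟩ := tree_parent_exists ht o h
        refine ⟨⟨w, (hs w).mpr hwd, ?_⟩, h⟩
        simp only [hch, Set.Finite.mem_toFinset]
        exact ⟨hadj.symm, by rw [hwd, h]⟩
    · have hcc : ∀ w ∈ s, (ch w).card = br T o w := by
        intro w _
        simp only [hch]
        rw [br, Set.ncard_eq_toFinset_card _ (hchfin w)]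
      calc ((s.biUnion ch).filter (fun v => T.dist o v = n + 1)).card
          ≤ (s.biUnion ch).card := Finset.card_filter_le _ _
        _ ≤ ∑ w ∈ s, (ch w).card := Finset.card_biUnion_le
        _ ≤ m ^ ((n + 1 + 1) / 2) * M ^ ((n + 1) / 2) := by
            rcases Nat.even_or_odd n with he | ho
            · obtain ⟨k, hk⟩ := he
              have hval : ∀ w ∈ s, (ch w).card = m := by
                intro w hw
                rw [hcc w hw]
                exact (hbr w).1 (by rw [(hs w).mp hw]; exact ⟨k, hk⟩)
              rw [Finset.sum_congr rfl hval, Finset.sum_const, smul_eq_mul]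
              have e1 : (n + 1) / 2 = k := by omega
              have e2 : n / 2 = k := by omega
              have e3 : (n + 1 + 1) / 2 = k + 1 := by omega
              rw [e1, e2] at hcard
              rw [e1, e3]
              calc s.card * m ≤ m ^ k * M ^ k * m := Nat.mul_le_mul_right _ hcard
                _ = m ^ (k + 1) * M ^ k := by ring
            · obtain ⟨k, hk⟩ := ho
              have hval : ∀ w ∈ s, (ch w).card = M := by
                intro w hw
                rw [hcc w hw]
                exact (hbr w).2 (by rw [(hs w).mp hw]; exact ⟨k, hk⟩)
              rw [Finset.sum_congr rfl hval, Finset.sum_const, smul_eq_mul]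
              have e1 : (n + 1) / 2 = k + 1 := by omega
              have e2 : n / 2 = k := by omega
              have e3 : (n + 1 + 1) / 2 = k + 1 := by omega
              rw [e1, e2] at hcard
              rw [e1, e3]
              calc s.card * M ≤ m ^ (k + 1) * M ^ k * M := Nat.mul_le_mul_right _ hcard
                _ = m ^ (k + 1) * M ^ (k + 1) := by ring

theorem stmt8 (V : Type*) [Countable V] [Infinite V] (T : SimpleGraph V)
    (htree : T.IsTree) (hlf : ∀ v, (T.neighborSet v).Finite)
    (o : V) (m M : ℕ) (hm : 1 ≤ m) (hmM : m ≤ M)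
    (hbr : ∀ v, (Even (T.dist o v) → br T o v = m) ∧ (Odd (T.dist o v) → br T o v = M))
    (f : V → ℂ)
    (hf : ∀ v, f v = if Even (T.dist o v) then (-(M : ℂ))⁻¹ ^ (T.dist o v / 2) else 0) :
    f ≠ 0 ∧ (∀ u, shiftOp T f u = 0) ∧
    (∃ B : ℝ, ∀ v, ‖f v‖ ≤ B) ∧
    (1 < M → ∀ p : ℝ, Real.logb M m + 1 < p → memlp f p) := by
  classical
  have hM1 : 1 ≤ M := le_trans hm hmM
  have hfo : f o = 1 := by
    rw [hf o]
    simp [T.dist_self]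
  refine ⟨?_, ?_, ?_, ?_⟩
  · -- f ≠ 0
    intro h0
    rw [h0] at hfo
    simp at hfo
  · -- shiftOp T f = 0
    intro u
    have hnb : shiftOp T f u = ∑ v ∈ (hlf u).toFinset, f v := by
      rw [shiftOp, ← finsum_mem_coe_finset, (hlf u).coe_toFinset]
    have hmem : ∀ v, v ∈ (hlf u).toFinset ↔ T.Adj u v := by
      intro v
      rw [Set.Finite.mem_toFinset]
      rfl
    rw [hnb]
    by_cases hev : Even (T.dist o u)
    · apply Finset.sum_eq_zero
      intro v hv
      have hadj := (hmem v).mp hv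
      have hodd : ¬ Even (T.dist o v) := by
        rcases tree_adj_dist htree o hadj with h | h
        · rw [h]
          simpa [Nat.even_add_one] using hev
        · rw [h] at hev
          exact (Nat.even_add_one.mp hev)
      rw [hf v, if_neg hodd]
    · have hoddu : Odd (T.dist o u) := Nat.not_even_iff_odd.mp hev
      obtain ⟨j, hj⟩ := hoddu
      have hd' : T.dist o u = 2 * j + 1 := hj
      obtain ⟨w, hw, hwd⟩ := tree_parent_exists htree o hd'
      rw [← Finset.sum_filter_add_sum_filter_not ((hlf u).toFinset)
        (fun v => T.dist o v = T.dist o u + 1)]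
      have hA : ∀ v ∈ (hlf u).toFinset.filter (fun v => T.dist o v = T.dist o u + 1),
          f v = (-(M : ℂ))⁻¹ ^ (j + 1) := by
        intro v hv
        rw [Finset.mem_filter] at hv
        have hdv : T.dist o v = 2 * j + 2 := by omega
        rw [hf v, if_pos (by rw [hdv]; exact ⟨j + 1, by ring⟩), hdv]
        norm_num
      have hAcard : ((hlf u).toFinset.filter (fun v => T.dist o v = T.dist o u + 1)).card
          = M := by
        have hset : (children T o u) =
            ↑((hlf u).toFinset.filter (fun v => T.dist o v = T.dist o u + 1)) := by
          ext v
          simp only [children, Set.mem_setOf_eq, Finset.coe_filter, hmem]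
        have hbru := (hbr u).2 (Nat.not_even_iff_odd.mp hev)
        rw [br, hset, Set.ncard_coe_finset] at hbru
        exact hbru
      have hB : (hlf u).toFinset.filter (fun v => ¬ T.dist o v = T.dist o u + 1) = {w} := by
        ext v
        simp only [Finset.mem_filter, Finset.mem_singleton, hmem]
        constructor
        · rintro ⟨hadj, hne⟩
          have hdv : T.dist o v = 2 * j := by
            rcases tree_adj_dist htree o hadj with h | h
            · exact absurd h hne
            · omega
          exact tree_parent_unique htree o hd' hadj (by omega) hw (by omega)
        · rintro rfl
          exact ⟨hw, by omega⟩
      rw [Finset.sum_congr rfl hA, Finset.sum_const, hAcard, hB, Finset.sum_singleton]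
      rw [hf w, if_pos (by rw [hwd]; exact ⟨j, by ring⟩), hwd]
      have hj2 : 2 * j / 2 = j := by omega
      rw [hj2, nsmul_eq_mul]
      have hM0 : (M : ℂ) ≠ 0 := Nat.cast_ne_zero.mpr (by omega)
      have hMa : (M : ℂ) * (-(M : ℂ))⁻¹ = -1 := by
        field_simp
      calc (M : ℂ) * (-(M : ℂ))⁻¹ ^ (j + 1) + (-(M : ℂ))⁻¹ ^ j
          = ((M : ℂ) * (-(M : ℂ))⁻¹) * (-(M : ℂ))⁻¹ ^ j + (-(M : ℂ))⁻¹ ^ j := by ring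
        _ = 0 := by rw [hMa]; ring
  · -- bounded
    refine ⟨1, fun v => ?_⟩
    rw [hf v]
    split_ifs with h
    · rw [norm_pow, norm_inv, norm_neg, Complex.norm_natCast]
      apply pow_le_one₀ (by positivity)
      apply inv_le_one_of_one_le₀
      exact_mod_cast hM1
    · simp
  · -- ℓ^p
    intro hM p hp
    have hM1' : (1 : ℝ) < M := by exact_mod_cast hM
    have hM0 : (0 : ℝ) < M := by linarith
    have hm0 : (0 : ℝ) < m := by exact_mod_cast hm
    have hlogb : 0 ≤ Real.logb M m := Real.logb_nonneg hM1' (by exact_mod_cast hm)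
    have hp0 : 0 < p := by linarith
    have hMp : (0 : ℝ) < (M : ℝ) ^ p := Real.rpow_pos_of_pos hM0 p
    set r : ℝ := (m : ℝ) * M * ((M : ℝ) ^ p)⁻¹ with hr
    have hr0 : 0 ≤ r := by positivity
    have hmlt : (m : ℝ) < (M : ℝ) ^ (p - 1) := by
      rw [← Real.logb_lt_iff_lt_rpow hM1' hm0]
      linarith
    have hr1 : r < 1 := by
      have hkey : (m : ℝ) * M < (M : ℝ) ^ p := by
        calc (m : ℝ) * M < (M : ℝ) ^ (p - 1) * M := by
              exact mul_lt_mul_of_pos_right hmlt hM0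
          _ = (M : ℝ) ^ p := by
              rw [← Real.rpow_add_one (ne_of_gt hM0)]
              norm_num
      rw [hr, ← div_eq_mul_inv, div_lt_one hMp]
      exact hkey
    set q := Real.sqrt r with hqdef
    have hq0 : 0 ≤ q := Real.sqrt_nonneg r
    have hq1 : q < 1 := by
      rw [hqdef, show (1 : ℝ) = Real.sqrt 1 by simp]
      exact Real.sqrt_lt_sqrt hr0 hr1
    have hqsq : q ^ 2 = r := Real.sq_sqrt hr0
    apply summable_of_sum_le (c := (1 - q)⁻¹) (fun v => by positivity)
    intro s
    set N := s.sup (fun v => T.dist o v) with hN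
    have hmaps : ∀ v ∈ s, T.dist o v ∈ Finset.range (N + 1) := by
      intro v hv
      rw [Finset.mem_range]
      exact Nat.lt_succ_of_le (Finset.le_sup hv)
    rw [← Finset.sum_fiberwise_of_maps_to hmaps]
    have key : ∀ n ∈ Finset.range (N + 1),
        (∑ v ∈ s.filter (fun v => T.dist o v = n), ‖f v‖ ^ p) ≤ q ^ n := by
      intro n _
      by_cases hev : Even n
      · obtain ⟨k, hk⟩ := hev
        have hterm : ∀ v ∈ s.filter (fun v => T.dist o v = n),
            ‖f v‖ ^ p = (((M : ℝ))⁻¹ ^ p) ^ k := by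
          intro v hv
          rw [Finset.mem_filter] at hv
          rw [hf v, if_pos (by rw [hv.2]; exact ⟨k, hk⟩), hv.2]
          have h2 : n / 2 = k := by omega
          rw [h2, norm_pow, norm_inv, norm_neg, Complex.norm_natCast]
          rw [← Real.rpow_natCast ((M : ℝ))⁻¹ k, ← Real.rpow_natCast (((M : ℝ))⁻¹ ^ p) k,
            ← Real.rpow_mul (by positivity), ← Real.rpow_mul (by positivity), mul_comm]
        rw [Finset.sum_congr rfl hterm, Finset.sum_const, nsmul_eq_mul]
        obtain ⟨t, hts, htc⟩ := tree_levels htree hlf o m M hbr n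
        have hsub : s.filter (fun v => T.dist o v = n) ⊆ t := fun v hv =>
          (hts v).mpr (Finset.mem_filter.mp hv).2
        have hcard : (s.filter (fun v => T.dist o v = n)).card ≤ m ^ k * M ^ k := by
          have h1 := Finset.card_le_card hsub
          have e1 : (n + 1) / 2 = k := by omega
          have e2 : n / 2 = k := by omega
          rw [e1, e2] at htc
          exact le_trans h1 htc
        have hstep : ((s.filter (fun v => T.dist o v = n)).card : ℝ) * (((M : ℝ))⁻¹ ^ p) ^ k
            ≤ (((m : ℝ) ^ k * (M : ℝ) ^ k)) * (((M : ℝ))⁻¹ ^ p) ^ k := by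
          apply mul_le_mul_of_nonneg_right _ (by positivity)
          exact_mod_cast hcard
        refine le_trans hstep (le_of_eq ?_)
        have hinv : ((M : ℝ))⁻¹ ^ p = ((M : ℝ) ^ p)⁻¹ := Real.inv_rpow (le_of_lt hM0) p
        have : ((m : ℝ) ^ k * (M : ℝ) ^ k) * (((M : ℝ))⁻¹ ^ p) ^ k = r ^ k := by
          rw [hinv, hr, mul_pow, mul_pow]
        rw [this, ← hqsq, ← pow_mul]
        congr 1
        omega
      · have hzero : ∀ v ∈ s.filter (fun v => T.dist o v = n), ‖f v‖ ^ p = 0 := by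
          intro v hv
          rw [Finset.mem_filter] at hv
          rw [hf v, if_neg (by rw [hv.2]; exact hev), norm_zero,
            Real.zero_rpow (ne_of_gt hp0)]
        rw [Finset.sum_eq_zero hzero]
        positivity
    calc (∑ n ∈ Finset.range (N + 1), ∑ v ∈ s.filter (fun v => T.dist o v = n), ‖f v‖ ^ p)
        ≤ ∑ n ∈ Finset.range (N + 1), q ^ n := Finset.sum_le_sum key
      _ ≤ ∑' n : ℕ, q ^ n := Summable.sum_le_tsum _ (fun i _ => pow_nonneg hq0 i)
          (summable_geometric_of_lt_one hq0 hq1)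
      _ = (1 - q)⁻¹ := tsum_geometric_of_lt_one hq0 hq1
end

section
/- For every integer M > 1 there exists a leafless rooted tree T of bounded degree in which every vertex has either exactly 1 or exactly M children, infinitely many vertices have exactly M children, and infinitely many vertices have exactly 1 child (so the essential maximum branching number is M and the essential minimum branching number is 1), such that for every 1 ≤ p < ∞ the kernel of the shift operator on ℓ^p(T) is trivial: the only f ∈ ℓ^p(T) with Sf = 0 is f = 0. -/
/-!
Take a spine `s₀ — s₁ — s₂ — ⋯` rooted at `s₀` and attach `M - 1` one-way infinite rays to every
`sₙ`: spine vertices have `M` children and ray vertices one. If `Sf = 0`, then at an interior ray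
vertex the equation reads `f(k) + f(k + 2) = 0` along the ray, so `|f|` is constant on every other
vertex of the ray and `f ∈ ℓ^p` forces `f = 0` there. At the first vertex of a ray the equation
becomes `f(sₙ) + 0 = 0`.
-/

open SimpleGraph Set Function

section ParentTree

variable {V : Type*}

def parentGraph (π : V → V) : SimpleGraph V := fromRel fun u v => π u = v

@[simp]
lemma parentGraph_adj {π : V → V} {u v : V} :
    (parentGraph π).Adj u v ↔ u ≠ v ∧ (π u = v ∨ π v = u) := by
  simp [parentGraph]

/-- Such a `d` exists iff iterating `π` from any vertex reaches `o`; it then makes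
`parentGraph π` a tree in which `d` is the distance to `o`. -/
structure IsDepth (π : V → V) (o : V) (d : V → ℕ) : Prop where
  parent_root : π o = o
  depth_root : d o = 0
  depth_parent : ∀ v, v ≠ o → d v = d (π v) + 1

namespace IsDepth

variable {π : V → V} {o : V} {d : V → ℕ}

lemma parent_ne (h : IsDepth π o d) {v : V} (hv : v ≠ o) : π v ≠ v := by
  intro hπv
  have := h.depth_parent v hv
  rw [hπv] at this
  omega

lemma adj_parent (h : IsDepth π o d) {v : V} (hv : v ≠ o) : (parentGraph π).Adj v (π v) :=
  parentGraph_adj.2 ⟨(h.parent_ne hv).symm, Or.inl rfl⟩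

lemma depth_parent_le (h : IsDepth π o d) (v : V) : d (π v) ≤ d v := by
  by_cases hv : v = o
  · rw [hv, h.parent_root]
  · have := h.depth_parent v hv
    omega

lemma depth_iterate_le (h : IsDepth π o d) (k : ℕ) (v : V) : d (π^[k] v) ≤ d v := by
  induction k with
  | zero => rfl
  | succ k ih =>
    rw [iterate_succ_apply']
    exact (h.depth_parent_le _).trans ih

lemma depth_le_depth_parent_succ (h : IsDepth π o d) (v : V) : d v ≤ d (π v) + 1 := by
  by_cases hv : v = o
  · rw [hv, h.parent_root]
    omega
  · exact (h.depth_parent v hv).le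

lemma depth_le_of_adj (h : IsDepth π o d) {u v : V} (huv : (parentGraph π).Adj u v) :
    d v ≤ d u + 1 := by
  rcases parentGraph_adj.1 huv with ⟨-, rfl | rfl⟩
  · have := h.depth_parent_le u
    omega
  · exact h.depth_le_depth_parent_succ _

lemma depth_le_of_walk (h : IsDepth π o d) {u v : V} (w : (parentGraph π).Walk u v) :
    d v ≤ d u + w.length := by
  induction w with
  | nil => simp
  | cons huv _ ih =>
    have := h.depth_le_of_adj huv
    rw [Walk.length_cons]
    omega

lemma exists_walk_to_root (h : IsDepth π o d) (v : V) :
    ∃ w : (parentGraph π).Walk v o, w.length = d v := by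
  induction hn : d v generalizing v with
  | zero =>
    obtain rfl : v = o := by
      by_contra hv
      have := h.depth_parent v hv
      omega
    exact ⟨Walk.nil, rfl⟩
  | succ n ih =>
    have hv : v ≠ o := by
      rintro rfl
      rw [h.depth_root] at hn
      omega
    obtain ⟨w, hw⟩ := ih (π v) (by have := h.depth_parent v hv; omega)
    exact ⟨Walk.cons (h.adj_parent hv) w, by rw [Walk.length_cons, hw]⟩

lemma connected (h : IsDepth π o d) : (parentGraph π).Connected :=
  haveI : Nonempty V := ⟨o⟩
  ⟨fun u v => (h.exists_walk_to_root u).elim fun wu _ =>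
    (h.exists_walk_to_root v).elim fun wv _ => ⟨wu.append wv.reverse⟩⟩

/-- Without the edge `s(v, π v)`, the descendants of `v` form a union of components, and `π v`
is not among them since its depth is smaller than that of `v`. -/
lemma isBridge_parent (h : IsDepth π o d) {v : V} (hv : v ≠ o) :
    (parentGraph π).IsBridge s(v, π v) := by
  set D := {w | ∃ k, π^[k] w = v}
  have hclosed : ∀ w w', w ∈ D → ((parentGraph π).deleteEdges {s(v, π v)}).Adj w w' →
      w' ∈ D := by
    rintro w w' ⟨k, hk⟩ hww'
    rw [deleteEdges_adj, parentGraph_adj] at hww'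
    obtain ⟨⟨-, rfl | rfl⟩, hne⟩ := hww'
    · cases k with
      | zero => exact absurd (by rw [← hk]; rfl) hne
      | succ k => exact ⟨k, by rwa [← iterate_succ_apply]⟩
    · exact ⟨k + 1, by rwa [iterate_succ_apply]⟩
  rw [isBridge_iff, reachable_iff_reflTransGen]
  intro hreach
  obtain ⟨k, hk⟩ : π v ∈ D :=
    Relation.ReflTransGen.rec (motive := fun w _ => w ∈ D) ⟨0, rfl⟩
      (fun _ hadj ih => hclosed _ _ ih hadj) hreach
  have h1 := h.depth_iterate_le k (π v)
  have h2 := h.depth_parent v hv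
  rw [hk] at h1
  omega

lemma isAcyclic (h : IsDepth π o d) : (parentGraph π).IsAcyclic := by
  refine isAcyclic_iff_forall_adj_isBridge.2 fun u v huv => ?_
  obtain ⟨hne, rfl | rfl⟩ := parentGraph_adj.1 huv
  · exact h.isBridge_parent fun hu => hne (by rw [hu, h.parent_root])
  · rw [Sym2.eq_swap]
    exact h.isBridge_parent fun hv => hne (by rw [hv, h.parent_root])

lemma isTree (h : IsDepth π o d) : (parentGraph π).IsTree :=
  ⟨h.connected, h.isAcyclic⟩

lemma dist_root (h : IsDepth π o d) (v : V) : (parentGraph π).dist o v = d v := by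
  apply le_antisymm
  · obtain ⟨w, hw⟩ := h.exists_walk_to_root v
    simpa [hw] using dist_le w.reverse
  · obtain ⟨w, hw⟩ := h.connected.exists_walk_length_eq_dist o v
    simpa [h.depth_root, hw] using h.depth_le_of_walk w

lemma children_eq (h : IsDepth π o d) (v : V) :
    children (parentGraph π) o v = {u | u ≠ o ∧ π u = v} := by
  ext u
  simp only [children, mem_ofPred_eq, parentGraph_adj, h.dist_root]
  constructor
  · rintro ⟨⟨hne, rfl | rfl⟩, hdu⟩
    · have := h.depth_parent_le v
      omega
    · refine ⟨fun hu => ?_, rfl⟩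
      rw [hu, h.depth_root] at hdu
      omega
  · rintro ⟨hu, rfl⟩
    exact ⟨⟨h.parent_ne hu, Or.inr rfl⟩, h.depth_parent u hu⟩

lemma neighborSet_subset (h : IsDepth π o d) (v : V) :
    (parentGraph π).neighborSet v ⊆ insert (π v) (children (parentGraph π) o v) := by
  rintro u ⟨hne, rfl | rfl⟩
  · exact mem_insert _ _
  · rw [h.children_eq]
    exact mem_insert_of_mem _ ⟨fun hu => hne (by rw [hu, h.parent_root]), rfl⟩

lemma neighborSet_eq (h : IsDepth π o d) {v : V} (hv : v ≠ o) :
    (parentGraph π).neighborSet v = insert (π v) (children (parentGraph π) o v) := by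
  refine (h.neighborSet_subset v).antisymm (insert_subset (h.adj_parent hv) fun u hu => ?_)
  exact (hu.1 : (parentGraph π).Adj v u)

end IsDepth

end ParentTree

lemma Function.Periodic.eq_zero_of_summable_rpow_norm {E : Type*} [NormedAddCommGroup E]
    {g : ℕ → E} {c : ℕ} (hg : Periodic g c) (hc : c ≠ 0) {p : ℝ} (hp : p ≠ 0)
    (hsum : Summable fun k => ‖g k‖ ^ p) : g = 0 := by
  funext k
  have hinj : Injective fun i : ℕ => k + i * c := fun i i' hii' => by
    simpa [hc] using hii'
  have hconst : Summable fun _ : ℕ => ‖g k‖ ^ p :=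
    (hsum.comp_injective hinj).congr fun i => by
      change ‖g (k + i • c)‖ ^ p = _
      rw [hg.nsmul]
  simpa [Real.rpow_eq_zero (norm_nonneg _) hp] using (summable_const_iff _).1 hconst

/-- `inl n` is the `n`-th vertex of the spine and `inr (n, j, k)` the `k`-th vertex of the
`j`-th ray attached to it. -/
abbrev Comb (m : ℕ) : Type := ℕ ⊕ (ℕ × Fin m × ℕ)

namespace Comb

variable {m : ℕ}

def parent : Comb m → Comb m
  | .inl 0 => .inl 0
  | .inl (n + 1) => .inl n
  | .inr (n, _, 0) => .inl n
  | .inr (n, j, k + 1) => .inr (n, j, k)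

def depth : Comb m → ℕ
  | .inl n => n
  | .inr (n, _, k) => n + 1 + k

variable (m) in
abbrev tree : SimpleGraph (Comb m) := parentGraph parent

lemma isDepth : IsDepth (parent (m := m)) (.inl 0) depth := by
  refine ⟨rfl, rfl, ?_⟩
  rintro ((_ | n) | ⟨n, j, _ | k⟩) hv
  · exact absurd rfl hv
  all_goals rfl

lemma children_spine (n : ℕ) : children (tree m) (.inl 0) (.inl n) =
    insert (.inl (n + 1)) (range fun j => .inr (n, j, 0)) := by
  ext ((_ | n') | ⟨n', j', _ | k'⟩) <;> simp [isDepth.children_eq, parent, eq_comm]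

lemma children_ray (n : ℕ) (j : Fin m) (k : ℕ) :
    children (tree m) (.inl 0) (.inr (n, j, k)) = {.inr (n, j, k + 1)} := by
  ext ((_ | n') | ⟨n', j', _ | k'⟩) <;> simp [isDepth.children_eq, parent]

lemma br_spine (n : ℕ) : br (tree m) (.inl 0) (.inl n) = m + 1 := by
  rw [br, children_spine, ncard_insert_of_notMem (by simp) (finite_range _),
    ← image_univ, ncard_image_of_injective _ fun j j' h => by simpa using h, ncard_univ,
    Nat.card_eq_fintype_card, Fintype.card_fin]

lemma br_ray (n : ℕ) (j : Fin m) (k : ℕ) : br (tree m) (.inl 0) (.inr (n, j, k)) = 1 := by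
  rw [br, children_ray, ncard_singleton]

lemma children_finite (v : Comb m) : (children (tree m) (.inl 0) v).Finite := by
  rcases v with n | ⟨n, j, k⟩
  · rw [children_spine]
    exact (finite_range _).insert _
  · rw [children_ray]
    exact finite_singleton _

lemma br_le (v : Comb m) : br (tree m) (.inl 0) v ≤ m + 1 := by
  rcases v with n | ⟨n, j, k⟩
  · rw [br_spine]
  · rw [br_ray]
    omega

lemma neighborSet_finite (v : Comb m) : ((tree m).neighborSet v).Finite :=
  ((children_finite v).insert _).subset (isDepth.neighborSet_subset v)

lemma ncard_neighborSet_le (v : Comb m) : ((tree m).neighborSet v).ncard ≤ m + 2 :=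
  calc ((tree m).neighborSet v).ncard
      ≤ (insert (parent v) (children (tree m) (.inl 0) v)).ncard :=
        ncard_le_ncard (isDepth.neighborSet_subset v) ((children_finite v).insert _)
    _ ≤ br (tree m) (.inl 0) v + 1 := ncard_insert_le _ _
    _ ≤ m + 2 := by have := br_le v; omega

lemma shiftOp_ray (f : Comb m → ℂ) (n : ℕ) (j : Fin m) (k : ℕ) :
    shiftOp (tree m) f (.inr (n, j, k)) =
      f (parent (.inr (n, j, k))) + f (.inr (n, j, k + 1)) := by
  rw [shiftOp, isDepth.neighborSet_eq (by simp), children_ray,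
    finsum_mem_insert _ (by cases k <;> simp [parent]; omega) (finite_singleton _),
    finsum_mem_singleton]

lemma eq_zero_of_shiftOp_eq_zero (hm : 0 < m) {p : ℝ} (hp : p ≠ 0) {f : Comb m → ℂ}
    (hf : memlp f p) (hS : ∀ u, shiftOp (tree m) f u = 0) : f = 0 := by
  have hray : ∀ n j k, f (.inr (n, j, k)) = 0 := by
    intro n j k
    have hanti : Antiperiodic (fun k => f (.inr (n, j, k))) 2 := fun k => by
      have := hS (.inr (n, j, k + 1))
      rw [shiftOp_ray] at this
      exact eq_neg_of_add_eq_zero_right this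
    have hsum : Summable fun k => ‖f (.inr (n, j, k))‖ ^ p :=
      Summable.comp_injective (f := fun v => ‖f v‖ ^ p) hf (i := fun k => .inr (n, j, k))
        fun k k' h => by simpa using h
    have h0 := hanti.periodic_two_mul.eq_zero_of_summable_rpow_norm (by norm_num) hp hsum
    exact congrFun h0 k
  funext v
  rcases v with n | ⟨n, j, k⟩
  · simpa [shiftOp_ray, parent, hray] using hS (.inr (n, ⟨0, hm⟩, 0))
  · exact hray n j k

end Comb

/-- For every integer `M > 1` there exists a leafless rooted tree `T`
of bounded degree in which every vertex has exactly `1` or exactly `M` children,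
infinitely many vertices have exactly `M` children and infinitely many have exactly `1`
child (so the essential maximum branching number is `M` and the essential minimum is `1`),
such that for every `1 ≤ p < ∞` the kernel of the shift on `ℓ^p(T)` is trivial. -/
theorem stmt10 (M : ℕ) (hM : 1 < M) :
    ∃ (V : Type) (_ : Countable V) (_ : Infinite V) (T : SimpleGraph V) (o : V),
      T.IsTree ∧
      (∀ v, (T.neighborSet v).Finite) ∧
      (∃ D : ℕ, ∀ v, (T.neighborSet v).ncard ≤ D) ∧
      (∀ v, br T o v = 1 ∨ br T o v = M) ∧
      {v | br T o v = M}.Infinite ∧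
      {v | br T o v = 1}.Infinite ∧
      (∀ v, (children T o v).Nonempty) ∧
      (∀ p : ℝ, 1 ≤ p →
        ∀ f : V → ℂ, memlp f p → (∀ u, shiftOp T f u = 0) → f = 0) := by
  obtain ⟨m, rfl⟩ : ∃ m, M = m + 1 := ⟨M - 1, by omega⟩
  have hm : 0 < m := by omega
  refine ⟨Comb m, inferInstance, inferInstance, Comb.tree m, .inl 0, Comb.isDepth.isTree,
    Comb.neighborSet_finite, ⟨m + 2, Comb.ncard_neighborSet_le⟩, ?_, ?_, ?_, ?_, ?_⟩
  · rintro (n | ⟨n, j, k⟩)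
    · exact Or.inr (Comb.br_spine n)
    · exact Or.inl (Comb.br_ray n j k)
  · exact infinite_of_injective_forall_mem Sum.inl_injective Comb.br_spine
  · exact infinite_of_injective_forall_mem (f := fun k => .inr (0, ⟨0, hm⟩, k))
      (fun k k' h => by simpa using h) (Comb.br_ray 0 ⟨0, hm⟩)
  · rintro (n | ⟨n, j, k⟩)
    · simp [Comb.children_spine]
    · simp [Comb.children_ray]
  · intro p hp f hf hS
    exact Comb.eq_zero_of_shiftOp_eq_zero hm (by positivity) hf hS
end

section
/- Let T be a tree of bounded degree containing two distinct vertices u and v of degree 1 whose distance m = d(u,v) is even, and let u = u_0 ~ u_1 ~ ⋯ ~ u_{m−1} ~ u_m = v be the path between them; if m ≥ 4, assume additionally that deg(u_2) = deg(u_4) = ⋯ = deg(u_{m−2}) = 2. Then for every 1 ≤ p ≤ ∞ the kernel of the shift operator on ℓ^p(T) is nontrivial; in fact, the function f with f(u_j) = (−1)^{j/2} for even indices j and f(w) = 0 for every other vertex w is a nonzero element of ℓ^p(T) with Sf = 0. -/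
/-- Let `T` be a tree of bounded degree with two distinct vertices
`u, v` of degree `1` at even distance `m`, joined by the path `u = w 0, w 1, …, w m = v`,
and (if `m ≥ 4`) with `deg (w 2) = deg (w 4) = ⋯ = deg (w (m−2)) = 2`. Then the function
`f` with `f (w j) = (−1)^{j/2}` for even `j ≤ m` and `f = 0` elsewhere is a nonzero
element of `ℓ^p(T)` for every `1 ≤ p ≤ ∞` with `Sf = 0`; in particular the kernel of the
shift on `ℓ^p(T)` is nontrivial for every `1 ≤ p ≤ ∞`. -/
theorem stmt11 (V : Type*) [Countable V] [Infinite V] (T : SimpleGraph V)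
    (htree : T.IsTree) (hlf : ∀ v, (T.neighborSet v).Finite)
    (hbdd : ∃ D : ℕ, ∀ v, gdeg T v ≤ D)
    (u v : V) (huv : u ≠ v) (hu : gdeg T u = 1) (hv : gdeg T v = 1)
    (m : ℕ) (hmdist : m = T.dist u v) (hmeven : Even m)
    (w : ℕ → V) (hw0 : w 0 = u) (hwm : w m = v)
    (hadj : ∀ j < m, T.Adj (w j) (w (j + 1)))
    (hinj : ∀ i ≤ m, ∀ j ≤ m, w i = w j → i = j)
    (hdeg2 : 4 ≤ m → ∀ j, 2 ≤ j → j ≤ m - 2 → Even j → gdeg T (w j) = 2)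
    (f : V → ℂ)
    (hf1 : ∀ j ≤ m, Even j → f (w j) = (-1 : ℂ) ^ (j / 2))
    (hf2 : ∀ x : V, (∀ j ≤ m, Even j → w j ≠ x) → f x = 0) :
    f ≠ 0 ∧ (∀ x, shiftOp T f x = 0) ∧
    (∀ p : ℝ, 1 ≤ p → memlp f p) ∧
    (∃ B : ℝ, ∀ x, ‖f x‖ ≤ B) := by
  classical
  have hm0 : m ≠ 0 := fun h => huv (by rw [← hw0, ← hwm, h])
  obtain ⟨b, hb⟩ := hmeven
  have hm2 : 2 ≤ m := by omega
  have hsupp : ∀ x, f x ≠ 0 → ∃ j, j ≤ m ∧ Even j ∧ w j = x := by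
    intro x hx
    by_contra h
    push_neg at h
    exact hx (hf2 x fun j hj hje => h j hj hje)
  have key : ∀ j, j ≤ m → Even j → ∀ x, T.Adj (w j) x →
      (1 ≤ j ∧ x = w (j - 1)) ∨ (j + 1 ≤ m ∧ x = w (j + 1)) := by
    intro j hj hje x hax
    obtain ⟨a, ha⟩ := hje
    rcases Nat.eq_zero_or_pos j with rfl | hjpos
    · have hN : ({w 1} : Set V) = T.neighborSet (w 0) := by
        apply Set.eq_of_subset_of_ncard_le _ _ (hlf _)
        · simpa [Set.singleton_subset_iff, SimpleGraph.mem_neighborSet] using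
            hadj 0 (by omega)
        · have h1 : (T.neighborSet (w 0)).ncard = 1 := by
            have : gdeg T (w 0) = 1 := by rw [hw0]; exact hu
            simpa [gdeg] using this
          simp [h1]
      right
      refine ⟨by omega, ?_⟩
      have hx : x ∈ T.neighborSet (w 0) := hax
      rw [← hN] at hx
      simpa using hx
    · rcases eq_or_ne j m with rfl | hjm
      · have hN : ({w (j - 1)} : Set V) = T.neighborSet (w j) := by
          apply Set.eq_of_subset_of_ncard_le _ _ (hlf _)
          · have h2 := hadj (j - 1) (by omega)
            have he : j - 1 + 1 = j := by omega
            rw [he] at h2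
            simpa [Set.singleton_subset_iff, SimpleGraph.mem_neighborSet] using h2.symm
          · have h1 : (T.neighborSet (w j)).ncard = 1 := by
              have : gdeg T (w j) = 1 := by rw [hwm]; exact hv
              simpa [gdeg] using this
            simp [h1]
        left
        refine ⟨by omega, ?_⟩
        have hx : x ∈ T.neighborSet (w j) := hax
        rw [← hN] at hx
        simpa using hx
      · have hd2 : (T.neighborSet (w j)).ncard = 2 := by
          have : gdeg T (w j) = 2 := hdeg2 (by omega) j (by omega) (by omega) ⟨a, ha⟩
          simpa [gdeg] using this
        have hne : w (j - 1) ≠ w (j + 1) := by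
          intro h
          have := hinj (j - 1) (by omega) (j + 1) (by omega) h
          omega
        have hN : ({w (j - 1), w (j + 1)} : Set V) = T.neighborSet (w j) := by
          apply Set.eq_of_subset_of_ncard_le _ _ (hlf _)
          · intro y hy
            rcases hy with rfl | hy
            · have h2 := hadj (j - 1) (by omega)
              have he : j - 1 + 1 = j := by omega
              rw [he] at h2
              exact h2.symm
            · simp only [Set.mem_singleton_iff] at hy
              subst hy
              exact hadj j (by omega)
          · rw [Set.ncard_pair hne, hd2]
        have hx : x ∈ T.neighborSet (w j) := hax
        rw [← hN] at hx
        rcases hx with rfl | hx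
        · left; exact ⟨by omega, rfl⟩
        · right
          simp only [Set.mem_singleton_iff] at hx
          exact ⟨by omega, hx⟩
  have hshift : ∀ x, shiftOp T f x = 0 := by
    intro x
    rw [shiftOp, ← finsum_mem_inter_support]
    by_cases hx : ∃ j, j ≤ m ∧ Even j ∧ T.Adj (w j) x
    · obtain ⟨j, hj, hje, haj⟩ := hx
      obtain ⟨k, hk1, hkm, ⟨t, ht⟩, rfl⟩ :
          ∃ k, 1 ≤ k ∧ k + 1 ≤ m ∧ (∃ t, k = 2 * t + 1) ∧ x = w k := by
        obtain ⟨a, ha⟩ := hje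
        rcases key j hj ⟨a, ha⟩ x haj with ⟨h1, rfl⟩ | ⟨h1, rfl⟩
        · exact ⟨j - 1, by omega, by omega, ⟨a - 1, by omega⟩, rfl⟩
        · exact ⟨j + 1, by omega, by omega, ⟨a, by omega⟩, rfl⟩
      have hne2 : w (k - 1) ≠ w (k + 1) := by
        intro h
        have := hinj (k - 1) (by omega) (k + 1) (by omega) h
        omega
      have hset : T.neighborSet (w k) ∩ Function.support f
          = {w (k - 1), w (k + 1)} := by
        ext y
        simp only [Set.mem_inter_iff, SimpleGraph.mem_neighborSet,
          Function.mem_support, Set.mem_insert_iff, Set.mem_singleton_iff]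
        constructor
        · rintro ⟨hy1, hy2⟩
          obtain ⟨i, him, hie, rfl⟩ := hsupp y hy2
          rcases key i him hie (w k) hy1.symm with ⟨h1, he⟩ | ⟨h1, he⟩
          · have := hinj k (by omega) (i - 1) (by omega) he
            right
            congr 1
            omega
          · have := hinj k (by omega) (i + 1) (by omega) he
            left
            congr 1
            omega
        · have hf1' := hf1 (k - 1) (by omega) ⟨t, by omega⟩
          have hf2' := hf1 (k + 1) (by omega) ⟨t + 1, by omega⟩
          rintro (rfl | rfl)
          · refine ⟨?_, by rw [hf1']; exact pow_ne_zero _ (by norm_num)⟩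
            have h2 := hadj (k - 1) (by omega)
            have he : k - 1 + 1 = k := by omega
            rw [he] at h2
            exact h2.symm
          · exact ⟨hadj k (by omega), by rw [hf2']; exact pow_ne_zero _ (by norm_num)⟩
      rw [hset, finsum_mem_pair hne2,
        hf1 (k - 1) (by omega) ⟨t, by omega⟩, hf1 (k + 1) (by omega) ⟨t + 1, by omega⟩]
      have e1 : (k - 1) / 2 = t := by omega
      have e2 : (k + 1) / 2 = t + 1 := by omega
      rw [e1, e2, pow_succ]
      ring
    · have hset : T.neighborSet x ∩ Function.support f = ∅ := by
        ext y
        simp only [Set.mem_inter_iff, SimpleGraph.mem_neighborSet,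
          Function.mem_support, Set.mem_empty_iff_false, iff_false, not_and]
        intro hy1 hy2
        obtain ⟨i, him, hie, rfl⟩ := hsupp y hy2
        exact hx ⟨i, him, hie, hy1.symm⟩
      rw [hset, finsum_mem_empty]
  have hsuppfin : (Function.support f).Finite := by
    apply Set.Finite.subset ((Set.finite_Iic m).image w)
    intro x hx
    obtain ⟨j, hj, _, rfl⟩ := hsupp x hx
    exact ⟨j, hj, rfl⟩
  refine ⟨?_, hshift, ?_, 1, ?_⟩
  · intro h
    have h0 := hf1 0 (Nat.zero_le m) Even.zero
    rw [h] at h0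
    simp at h0
  · intro p hp
    apply summable_of_finite_support
    apply hsuppfin.subset
    intro x hx
    simp only [Function.mem_support] at hx ⊢
    intro hfx
    apply hx
    rw [hfx]
    simp [Real.zero_rpow (by linarith : p ≠ 0)]
  · intro x
    by_cases hx : f x = 0
    · simp [hx]
    · obtain ⟨j, hj, hje, rfl⟩ := hsupp x hx
      rw [hf1 j hj hje]
      simp
end

section
/- Let G be the kite with an infinite tail built on a triangle (the case n = 2): vertices v_0, v_1, v_2 pairwise adjacent, together with u_1, u_2, u_3, … where u_k ~ u_{k+1} for all k ≥ 1 and v_0 ~ u_1. For every 1 ≤ p < ∞, the set of eigenvalues of the shift operator S on ℓ^p(G) is exactly {−1, √5}. -/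
/-- Base relation for the kite with an infinite tail: `Sum.inl j` is the cycle vertex
`v_j` (`j = 0, …, n`) and `Sum.inr k` is the tail vertex `u_{k+1}` (`k = 0, 1, 2, …`). -/
def kiteRel (n : ℕ) : (Fin (n + 1) ⊕ ℕ) → (Fin (n + 1) ⊕ ℕ) → Prop
  | Sum.inl i, Sum.inl j => (j : ℕ) = ((i : ℕ) + 1) % (n + 1)
  | Sum.inl i, Sum.inr k => (i : ℕ) = 0 ∧ k = 0
  | Sum.inr k, Sum.inr l => l = k + 1
  | _, _ => False

/-- The kite with an infinite tail: the `(n+1)`-cycle `v_0, …, v_n` together with the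
ray `u_1 ~ u_2 ~ ⋯`, and the edge `v_0 ~ u_1`. -/
def kite (n : ℕ) : SimpleGraph (Fin (n + 1) ⊕ ℕ) :=
  SimpleGraph.fromRel (kiteRel n)

/-!
An `ℓ^p` eigenfunction tends to `0` along the tail, where it satisfies
`f(u_k) + f(u_{k+2}) = z f(u_{k+1})`. Writing `z = r + r⁻¹` with `‖r‖ ≤ 1`, decay forces the tail
to be geometric, `f(u_{k+1}) = r^k f(u_1)`. If the tail vanishes, `f(v_0) = 0` and the triangle
leaves only the eigenvalue `-1` (eigenvector `(0, 1, -1)` on `v_0, v_1, v_2`). Otherwise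
`‖r‖ < 1`, and eliminating `f(v_1), f(v_2)` from the triangle equations gives `r² + r = 1`, so
`z = 2r + 1 = ±√5`; only `+√5` has `‖r‖ < 1`.
-/

open Filter Topology

theorem memlp.tendsto_cofinite_zero {V : Type*} {f : V → ℂ} {p : ℝ} (hf : memlp f p)
    (hp : 0 < p) : Tendsto f cofinite (𝓝 0) := by
  have h := (Real.continuousAt_rpow_const 0 p⁻¹ (.inr (inv_nonneg.2 hp.le))).tendsto.comp
    (Summable.tendsto_cofinite_zero hf)
  rw [Real.zero_rpow (inv_ne_zero hp.ne')] at h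
  exact tendsto_zero_iff_norm_tendsto_zero.2 <|
    h.congr fun v => Real.rpow_rpow_inv (norm_nonneg _) hp.ne'

theorem memlp_zero {V : Type*} {p : ℝ} (hp : p ≠ 0) : memlp (0 : V → ℂ) p := by
  simp [memlp, Real.zero_rpow hp, summable_zero]

theorem memlp_sum_elim {ι κ : Type*} [Finite ι] (g : ι → ℂ) {h : κ → ℂ} {p : ℝ}
    (hh : memlp h p) : memlp (Sum.elim g h) p :=
  Summable.sum _ (.of_finite) hh

theorem memlp_pow {t : ℂ} (ht : ‖t‖ < 1) {p : ℝ} (hp : 0 < p) : memlp (t ^ ·) p := by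
  have hq := summable_geometric_of_lt_one (Real.rpow_nonneg (norm_nonneg t) p)
    (Real.rpow_lt_one (norm_nonneg t) ht hp)
  refine hq.congr fun k => ?_
  rw [norm_pow, ← Real.rpow_natCast, ← Real.rpow_natCast, ← Real.rpow_mul (norm_nonneg t),
    ← Real.rpow_mul (norm_nonneg t), mul_comm]

section Recurrence

variable {𝕜 : Type*} [NormedField 𝕜]

theorem norm_lt_one_of_tendsto_pow_mul {r c : 𝕜} (hc : c ≠ 0)
    (h : Tendsto (fun k : ℕ => r ^ k * c) atTop (𝓝 0)) : ‖r‖ < 1 :=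
  tendsto_pow_atTop_nhds_zero_iff_norm_lt_one.1 (by simpa [hc] using h.mul_const c⁻¹)

theorem eq_pow_mul_of_tendsto_zero {b : ℕ → 𝕜} {r z : 𝕜} (hr : ‖r‖ ≤ 1) (hrz : r * (z - r) = 1)
    (hrec : ∀ k, b k + b (k + 2) = z * b (k + 1)) (hb : Tendsto b atTop (𝓝 0)) (k : ℕ) :
    b k = r ^ k * b 0 := by
  set d : ℕ → 𝕜 := fun k => b (k + 1) - r * b k with hd_def
  have hd : ∀ k, d k = (z - r) ^ k * d 0 := by
    intro k
    induction k with
    | zero => simp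
    | succ k ih =>
      rw [pow_succ', mul_assoc, ← ih, hd_def]
      linear_combination hrec k + b k * hrz
  -- `d` is geometric with ratio `z - r = r⁻¹` of norm `≥ 1`, yet tends to `0`
  have hd0 : d 0 = 0 := by
    by_contra hd0
    have hs := norm_lt_one_of_tendsto_pow_mul hd0 <|
      (by simpa using (hb.comp (tendsto_add_atTop_nat 1)).sub (hb.const_mul r) :
        Tendsto d atTop (𝓝 0)).congr hd
    have : ‖r‖ * ‖z - r‖ = 1 := by rw [← norm_mul, hrz, norm_one]
    nlinarith [norm_nonneg r, norm_nonneg (z - r)]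
  induction k with
  | zero => simp
  | succ k ih =>
    have : d k = 0 := by rw [hd, hd0, mul_zero]
    rw [pow_succ', mul_assoc, ← ih]
    linear_combination this

end Recurrence

theorem Complex.exists_norm_le_one_mul_sub_eq_one (z : ℂ) :
    ∃ r : ℂ, ‖r‖ ≤ 1 ∧ r * (z - r) = 1 := by
  obtain ⟨w, hw⟩ := IsAlgClosed.exists_eq_mul_self (z ^ 2 - 4)
  have hr : (z + w) / 2 * (z - (z + w) / 2) = 1 := by linear_combination (1 / 4 : ℂ) * hw
  have hnorm : ‖(z + w) / 2‖ * ‖z - (z + w) / 2‖ = 1 := by rw [← norm_mul, hr, norm_one]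
  rcases le_total ‖(z + w) / 2‖ 1 with h | h
  · exact ⟨_, h, hr⟩
  · refine ⟨z - (z + w) / 2, ?_, by rw [sub_sub_cancel, mul_comm, hr]⟩
    nlinarith [norm_nonneg (z - (z + w) / 2)]

theorem shiftOp_eq_add_of_neighborSet_eq_pair {V : Type*} {G : SimpleGraph V} {u a b : V}
    (hab : a ≠ b) (h : G.neighborSet u = {a, b}) (f : V → ℂ) : shiftOp G f u = f a + f b := by
  rw [shiftOp, h, finsum_mem_pair hab]

section KiteTwo

open Sum

theorem kite_two_neighborSet_inl_zero :
    (kite 2).neighborSet (inl 0) = {inl 1, inl 2, inr 0} := by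
  ext (j | k) <;> simp [kite, kiteRel]
  omega

theorem kite_two_neighborSet_inl_one : (kite 2).neighborSet (inl 1) = {inl 0, inl 2} := by
  ext (j | k) <;> simp [kite, kiteRel]
  omega

theorem kite_two_neighborSet_inl_two : (kite 2).neighborSet (inl 2) = {inl 0, inl 1} := by
  ext (j | k) <;> simp [kite, kiteRel]
  omega

theorem kite_two_neighborSet_inr_zero : (kite 2).neighborSet (inr 0) = {inl 0, inr 1} := by
  ext (j | k) <;> simp [kite, kiteRel]
  omega

theorem kite_two_neighborSet_inr_succ (k : ℕ) :
    (kite 2).neighborSet (inr (k + 1)) = {inr k, inr (k + 2)} := by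
  ext (j | l) <;> simp [kite, kiteRel]
  omega

theorem kite_two_shiftOp_eq_mul_iff (f : Fin 3 ⊕ ℕ → ℂ) (z : ℂ) :
    (∀ x, shiftOp (kite 2) f x = z * f x) ↔
      f (inl 1) + f (inl 2) + f (inr 0) = z * f (inl 0) ∧
      f (inl 0) + f (inl 2) = z * f (inl 1) ∧
      f (inl 0) + f (inl 1) = z * f (inl 2) ∧
      f (inl 0) + f (inr 1) = z * f (inr 0) ∧
      ∀ k, f (inr k) + f (inr (k + 2)) = z * f (inr (k + 1)) := by
  have h0 : shiftOp (kite 2) f (inl 0) = f (inl 1) + f (inl 2) + f (inr 0) := by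
    rw [shiftOp, kite_two_neighborSet_inl_zero, finsum_mem_insert _ (by simp) (Set.toFinite _),
      finsum_mem_pair (by simp), add_assoc]
  have h1 := shiftOp_eq_add_of_neighborSet_eq_pair (by simp) kite_two_neighborSet_inl_one f
  have h2 := shiftOp_eq_add_of_neighborSet_eq_pair (by simp) kite_two_neighborSet_inl_two f
  have h3 := shiftOp_eq_add_of_neighborSet_eq_pair (by simp) kite_two_neighborSet_inr_zero f
  have h4 (k : ℕ) :=
    shiftOp_eq_add_of_neighborSet_eq_pair (by simp) (kite_two_neighborSet_inr_succ k) f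
  constructor
  · intro h
    exact ⟨h0 ▸ h (inl 0), h1 ▸ h (inl 1), h2 ▸ h (inl 2), h3 ▸ h (inr 0),
      fun k => h4 k ▸ h (inr (k + 1))⟩
  · rintro ⟨e0, e1, e2, e3, e4⟩ (j | _ | k)
    · fin_cases j
      exacts [h0.trans e0, h1.trans e1, h2.trans e2]
    · exact h3.trans e3
    · exact (h4 k).trans (e4 k)

theorem kite_two_eq_neg_one_of_tail_eq_zero {f : Fin 3 ⊕ ℕ → ℂ} {z : ℂ} (hf : f ≠ 0)
    (heig : ∀ x, shiftOp (kite 2) f x = z * f x) (htail : ∀ k, f (inr k) = 0) : z = -1 := by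
  obtain ⟨e0, e1, -, e3, -⟩ := (kite_two_shiftOp_eq_mul_iff f z).1 heig
  have ha : f (inl 0) = 0 := by simpa [htail] using e3
  have hf1 : f (inl 1) ≠ 0 := by
    intro hf1
    have hf2 : f (inl 2) = 0 := by simpa [ha, hf1] using e1
    exact hf (funext fun | inl 0 => ha | inl 1 => hf1 | inl 2 => hf2 | inr k => htail k)
  have h : (z + 1) * f (inl 1) = 0 := by linear_combination e0 - e1 - htail 0 + (z + 1) * ha
  linear_combination (mul_eq_zero.1 h).resolve_right hf1

theorem eq_sqrt_five_of_norm_lt_one {r z : ℂ} (hr : ‖r‖ < 1) (hrz : r * (z - r) = 1)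
    (h : z - 1 = (z - 2) * (z + 1) * (z - r)) : z = √5 := by
  -- with `s := z - r = r⁻¹`, `h` says `s ^ 2 * (s ^ 2 - s - 1) = 0`
  have hgolden : r ^ 2 + r = 1 := by
    linear_combination r ^ 3 * h + (r ^ 2 * z ^ 2 - r ^ 2 * z + r * z - 2 * r ^ 2 - r + 1) * hrz
  have hz : z = 2 * r + 1 :=
    mul_left_cancel₀ (left_ne_zero_of_mul_eq_one hrz) (by linear_combination hrz - hgolden)
  have h5 : ((√5 : ℝ) : ℂ) ^ 2 = 5 := by norm_cast; simp
  rcases mul_eq_zero.1 (show (z - √5) * (z + √5) = 0 by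
    linear_combination (z + 2 * r + 1) * hz + 4 * hgolden - h5) with hpos | hneg
  · linear_combination hpos
  · have hr' : r = ((-√5 - 1) / 2 : ℝ) := by push_cast; linear_combination (hneg - hz) / 2
    rw [hr', Complex.norm_real, Real.norm_eq_abs, abs_lt] at hr
    nlinarith [hr.1, Real.sq_sqrt (show (0 : ℝ) ≤ 5 by norm_num), Real.sqrt_nonneg 5]

theorem kite_two_eq_neg_one_or_sqrt_five {p : ℝ} (hp : 0 < p) {f : Fin 3 ⊕ ℕ → ℂ} {z : ℂ}
    (hf : f ≠ 0) (hlp : memlp f p) (heig : ∀ x, shiftOp (kite 2) f x = z * f x) : z = -1 ∨ z = √5 := by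
  obtain ⟨e0, e1, e2, e3, etail⟩ := (kite_two_shiftOp_eq_mul_iff f z).1 heig
  obtain ⟨r, hr, hrz⟩ := Complex.exists_norm_le_one_mul_sub_eq_one z
  have htail : Tendsto (fun k => f (inr k)) atTop (𝓝 0) := by
    rw [← Nat.cofinite_eq_atTop]
    exact (hlp.tendsto_cofinite_zero hp).comp inr_injective.tendsto_cofinite
  have hgeom := eq_pow_mul_of_tendsto_zero hr hrz etail htail
  by_cases hb : f (inr 0) = 0
  · exact .inl (kite_two_eq_neg_one_of_tail_eq_zero hf heig fun k => by rw [hgeom, hb, mul_zero])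
  · have hr1 := norm_lt_one_of_tendsto_pow_mul hb (htail.congr hgeom)
    refine .inr (eq_sqrt_five_of_norm_lt_one hr1 hrz (mul_right_cancel₀ hb ?_))
    linear_combination (z - 1) * e0 + e1 + e2 + (z - 2) * (z + 1) * (e3 - hgeom 1)

theorem kite_two_exists_eigenfunction_neg_one {p : ℝ} (hp : p ≠ 0) :
    ∃ f : Fin 3 ⊕ ℕ → ℂ, f ≠ 0 ∧ memlp f p ∧ ∀ x, shiftOp (kite 2) f x = -1 * f x :=
  ⟨Sum.elim ![0, 1, -1] 0, fun h => by simpa using congrFun h (inl 1),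
    memlp_sum_elim _ (memlp_zero hp), (kite_two_shiftOp_eq_mul_iff _ _).2 (by simp)⟩

theorem kite_two_exists_eigenfunction_sqrt_five {p : ℝ} (hp : 0 < p) :
    ∃ f : Fin 3 ⊕ ℕ → ℂ, f ≠ 0 ∧ memlp f p ∧ ∀ x, shiftOp (kite 2) f x = √5 * f x := by
  set t : ℝ := (√5 - 1) / 2 with ht_def
  have h5 : √5 ^ 2 = 5 := Real.sq_sqrt (by norm_num)
  have ht : (t : ℂ) ^ 2 + t = 1 := by norm_cast; linear_combination h5 / 4
  have hz : ((√5 : ℝ) : ℂ) = 2 * t + 1 := by rw [ht_def]; push_cast; ring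
  have htn : ‖(t : ℂ)‖ < 1 := by
    rw [Complex.norm_real, Real.norm_eq_abs, abs_lt]
    constructor <;> nlinarith [Real.sqrt_nonneg 5]
  refine ⟨Sum.elim ![t + 1, (t + 2) / 2, (t + 2) / 2] (fun k => (t : ℂ) ^ k),
    fun h => by simpa using congrFun h (inr 0), memlp_sum_elim _ (memlp_pow htn hp),
    (kite_two_shiftOp_eq_mul_iff _ _).2 ⟨?_, ?_, ?_, ?_, fun k => ?_⟩⟩ <;> simp only [hz] <;> simp
  · linear_combination -2 * ht
  · linear_combination -ht
  · linear_combination -ht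
  · ring
  · linear_combination -(t : ℂ) ^ k * ht

end KiteTwo

/-- For the kite with an infinite tail built on a triangle (`n = 2`),
for every `1 ≤ p < ∞` the set of eigenvalues of the shift on `ℓ^p` is exactly
`{−1, √5}`. -/
theorem stmt12 (p : ℝ) (hp : 1 ≤ p) :
    {z : ℂ | ∃ f : (Fin 3 ⊕ ℕ) → ℂ, f ≠ 0 ∧ memlp f p ∧
        ∀ x, shiftOp (kite 2) f x = z * f x}
      = {(-1 : ℂ), ((Real.sqrt 5 : ℝ) : ℂ)} := by
  ext z
  constructor
  · rintro ⟨f, hf, hlp, heig⟩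
    exact kite_two_eq_neg_one_or_sqrt_five (by positivity) hf hlp heig
  · rintro (rfl | rfl)
    exacts [kite_two_exists_eigenfunction_neg_one (by positivity),
      kite_two_exists_eigenfunction_sqrt_five (by positivity)]
end

section
/- Define polynomials h_n by h_1(b) = 1, h_2(b) = −b^6 − b^4 + 1, and h_n(b) = (b^4 + b^2 + 1)·h_{n−1}(b) − b^2·(b^2+1)^2·h_{n−2}(b) for n ≥ 3. Then: (i) for every n ≥ 2, h_n is an even polynomial of degree 4n−2 whose leading coefficient is −1 and whose constant term is 1; (ii) for every n ≥ 2, h_n has a root in the open interval (0,1); and (iii) denoting by α_n the smallest positive root of h_n, the sequence (α_n)_{n≥2} is strictly decreasing: α_{n+1} < α_n for all n ≥ 2. -/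
open Polynomial

/-- The polynomials `h_n`: `h_1 = 1`, `h_2 = −b⁶ − b⁴ + 1`, and
`h_n = (b⁴ + b² + 1)·h_{n−1} − b²(b²+1)²·h_{n−2}` for `n ≥ 3`. -/
noncomputable def hpoly : ℕ → Polynomial ℝ
  | 0 => 1
  | 1 => 1
  | 2 => -X ^ 6 - X ^ 4 + 1
  | n + 3 => (X ^ 4 + X ^ 2 + 1) * hpoly (n + 2) - X ^ 2 * (X ^ 2 + 1) ^ 2 * hpoly (n + 1)

/-- Auxiliary "half" polynomials with `hpoly n = expand 2 (Haux n)`. -/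
noncomputable def Haux : ℕ → Polynomial ℝ
  | 0 => 1
  | 1 => 1
  | 2 => -X ^ 3 - X ^ 2 + 1
  | n + 3 => (X ^ 2 + X + 1) * Haux (n + 2) - X * (X + 1) ^ 2 * Haux (n + 1)

theorem hpoly_eq_expand : ∀ n, hpoly n = expand ℝ 2 (Haux n)
  | 0 => by simp [hpoly, Haux]
  | 1 => by simp [hpoly, Haux]
  | 2 => by
      simp only [hpoly, Haux, map_add, map_sub, map_neg, map_pow, map_one, expand_X]
      ring
  | n + 3 => by
      rw [show hpoly (n + 3) = (X ^ 4 + X ^ 2 + 1) * hpoly (n + 2)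
            - X ^ 2 * (X ^ 2 + 1) ^ 2 * hpoly (n + 1) from rfl,
          show Haux (n + 3) = (X ^ 2 + X + 1) * Haux (n + 2)
            - X * (X + 1) ^ 2 * Haux (n + 1) from rfl,
          hpoly_eq_expand (n + 2), hpoly_eq_expand (n + 1)]
      simp only [map_add, map_sub, map_mul, map_pow, map_one, expand_X]
      ring

theorem Haux_eval_zero : ∀ n, (Haux n).eval 0 = 1
  | 0 => by simp [Haux]
  | 1 => by simp [Haux]
  | 2 => by simp [Haux]
  | n + 3 => by
      rw [show Haux (n + 3) = (X ^ 2 + X + 1) * Haux (n + 2)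
            - X * (X + 1) ^ 2 * Haux (n + 1) from rfl]
      simp [Haux_eval_zero (n + 2)]

theorem Haux_coeff_zero (n : ℕ) : (Haux n).coeff 0 = 1 := by
  rw [coeff_zero_eq_eval_zero]; exact Haux_eval_zero n

theorem Haux_ne_zero (n : ℕ) : Haux n ≠ 0 := fun h => by
  simpa [h] using Haux_coeff_zero n

theorem Haux_deg_le : ∀ n, (Haux (n + 1)).natDegree ≤ 2 * n + 1
  | 0 => by simp [Haux]
  | 1 => by
      rw [show Haux 2 = -X ^ 3 - X ^ 2 + 1 from rfl]
      compute_degree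
  | n + 2 => by
      have h1 : (Haux (n + 2)).natDegree ≤ 2 * n + 3 := Haux_deg_le (n + 1)
      have h2 : (Haux (n + 1)).natDegree ≤ 2 * n + 1 := Haux_deg_le n
      rw [show Haux (n + 3) = (X ^ 2 + X + 1) * Haux (n + 2)
            - X * (X + 1) ^ 2 * Haux (n + 1) from rfl]
      refine (natDegree_sub_le _ _).trans (max_le ?_ ?_)
      · refine (natDegree_mul_le).trans ?_
        have : (X ^ 2 + X + 1 : ℝ[X]).natDegree ≤ 2 := by compute_degree
        omega
      · refine (natDegree_mul_le).trans ?_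
        have : (X * (X + 1) ^ 2 : ℝ[X]).natDegree ≤ 3 := by compute_degree
        omega

theorem quad_natDegree : (X ^ 2 + X + 1 : ℝ[X]).natDegree = 2 := by
  compute_degree!

theorem quad_leadingCoeff : (X ^ 2 + X + 1 : ℝ[X]).leadingCoeff = 1 := by
  rw [leadingCoeff, quad_natDegree]
  simp [coeff_X_pow, coeff_X, coeff_one]

theorem Haux_deg : ∀ n, (Haux (n + 2)).natDegree = 2 * n + 3 ∧
    (Haux (n + 2)).coeff (2 * n + 3) = -1
  | 0 => by
      rw [show Haux 2 = -X ^ 3 - X ^ 2 + 1 from rfl]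
      constructor
      · compute_degree!
      · simp [coeff_X_pow, coeff_one, coeff_X]
  | n + 1 => by
      obtain ⟨hd, hc⟩ := Haux_deg n
      have hquad : (X ^ 2 + X + 1 : ℝ[X]) ≠ 0 := by
        intro h
        have := quad_leadingCoeff
        rw [h] at this
        simp at this
      have hA : ((X ^ 2 + X + 1) * Haux (n + 2) : ℝ[X]).natDegree = 2 * n + 5 := by
        rw [natDegree_mul hquad (Haux_ne_zero (n + 2)), quad_natDegree, hd]
        omega
      have hAc : ((X ^ 2 + X + 1) * Haux (n + 2) : ℝ[X]).coeff (2 * n + 5) = -1 := by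
        have h := coeff_mul_degree_add_degree (X ^ 2 + X + 1 : ℝ[X]) (Haux (n + 2))
        rw [quad_natDegree, hd, quad_leadingCoeff, one_mul,
          show (2 : ℕ) + (2 * n + 3) = 2 * n + 5 from by omega] at h
        rw [h, leadingCoeff, hd, hc]
      have hB : ((X * (X + 1) ^ 2) * Haux (n + 1) : ℝ[X]).natDegree ≤ 2 * n + 4 := by
        refine (natDegree_mul_le).trans ?_
        have h3 : (X * (X + 1) ^ 2 : ℝ[X]).natDegree ≤ 3 := by compute_degree
        have h4 : (Haux (n + 1)).natDegree ≤ 2 * n + 1 := Haux_deg_le n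
        omega
      rw [show Haux (n + 3) = (X ^ 2 + X + 1) * Haux (n + 2)
            - X * (X + 1) ^ 2 * Haux (n + 1) from rfl,
        show 2 * (n + 1) + 3 = 2 * n + 5 from by omega]
      have hBlt : ((X * (X + 1) ^ 2) * Haux (n + 1) : ℝ[X]).natDegree <
          ((X ^ 2 + X + 1) * Haux (n + 2) : ℝ[X]).natDegree := by
        omega
      constructor
      · rw [natDegree_sub_eq_left_of_natDegree_lt hBlt, hA]
      · rw [coeff_sub, hAc, coeff_eq_zero_of_natDegree_lt (by omega : 
          ((X * (X + 1) ^ 2) * Haux (n + 1) : ℝ[X]).natDegree < 2 * n + 5)]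
        ring
  termination_by n => n

/-! ### Analytic part -/

theorem hpoly_eval_zero : ∀ n, (hpoly n).eval 0 = 1
  | 0 => by simp [hpoly]
  | 1 => by simp [hpoly]
  | 2 => by simp [hpoly]
  | n + 3 => by
      rw [show hpoly (n + 3) = (X ^ 4 + X ^ 2 + 1) * hpoly (n + 2)
            - X ^ 2 * (X ^ 2 + 1) ^ 2 * hpoly (n + 1) from rfl]
      simp [hpoly_eval_zero (n + 2)]

theorem hpoly_ne_zero (n : ℕ) : hpoly n ≠ 0 := fun h => by
  have := hpoly_eval_zero n
  rw [h] at this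
  simp at this

theorem hpoly_eval_rec (n : ℕ) (x : ℝ) :
    (hpoly (n + 3)).eval x = (x ^ 4 + x ^ 2 + 1) * (hpoly (n + 2)).eval x
      - x ^ 2 * (x ^ 2 + 1) ^ 2 * (hpoly (n + 1)).eval x := by
  rw [show hpoly (n + 3) = (X ^ 4 + X ^ 2 + 1) * hpoly (n + 2)
        - X ^ 2 * (X ^ 2 + 1) ^ 2 * hpoly (n + 1) from rfl]
  simp

def Sset (n : ℕ) : Set ℝ := {x : ℝ | 0 < x ∧ (hpoly n).eval x = 0}

theorem Sset_finite (n : ℕ) : (Sset n).Finite :=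
  (Polynomial.finite_setOf_isRoot (hpoly_ne_zero n)).subset fun _ hx => hx.2

theorem exroot (n : ℕ) {c : ℝ} (hc : 0 < c) (hneg : (hpoly n).eval c < 0) :
    ∃ y : ℝ, 0 < y ∧ y < c ∧ (hpoly n).eval y = 0 := by
  have hsub := intermediate_value_Ioo' (le_of_lt hc)
    ((hpoly n).continuous.continuousOn (s := Set.Icc 0 c))
  have h0m : (0 : ℝ) ∈ Set.Ioo ((hpoly n).eval c) ((hpoly n).eval 0) := by
    rw [hpoly_eval_zero n]
    exact ⟨hneg, one_pos⟩
  obtain ⟨y, hy, hy0⟩ := hsub h0m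
  exact ⟨y, hy.1, hy.2, hy0⟩

theorem isLeast_sInf_Sset (n : ℕ) (h : (Sset n).Nonempty) :
    IsLeast (Sset n) (sInf (Sset n)) :=
  ⟨h.csInf_mem (Sset_finite n), fun _ hx => csInf_le (Sset_finite n).bddBelow hx⟩

theorem pos_before (n : ℕ) {α x : ℝ} (h : IsLeast (Sset n) α)
    (hx : 0 < x) (hxa : x < α) : 0 < (hpoly n).eval x := by
  by_contra hle
  push_neg at hle
  rcases eq_or_lt_of_le hle with heq | hlt
  · exact absurd (h.2 ⟨hx, heq⟩) (not_le.2 hxa)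
  · obtain ⟨y, hy0, hyx, hy⟩ := exroot n hx hlt
    exact absurd (h.2 ⟨hy0, hy⟩) (not_le.2 (hyx.trans hxa))

theorem step_lemma (n : ℕ) (hne : (Sset (n + 2)).Nonempty)
    (hpos : 0 < (hpoly (n + 1)).eval (sInf (Sset (n + 2)))) :
    (Sset (n + 3)).Nonempty ∧ sInf (Sset (n + 3)) < sInf (Sset (n + 2)) := by
  set α := sInf (Sset (n + 2)) with hα
  have hL := isLeast_sInf_Sset (n + 2) hne
  have hα0 : 0 < α := hL.1.1
  have hαroot : (hpoly (n + 2)).eval α = 0 := hL.1.2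
  have hneg : (hpoly (n + 3)).eval α < 0 := by
    rw [hpoly_eval_rec, hαroot]
    have hp : 0 < α ^ 2 * (α ^ 2 + 1) ^ 2 := by positivity
    nlinarith
  obtain ⟨y, hy0, hyα, hy⟩ := exroot (n + 3) hα0 hneg
  have hne3 : (Sset (n + 3)).Nonempty := ⟨y, hy0, hy⟩
  exact ⟨hne3, lt_of_le_of_lt ((isLeast_sInf_Sset _ hne3).2 ⟨hy0, hy⟩) hyα⟩

theorem key : ∀ n : ℕ, ((Sset (n + 2)).Nonempty ∧ sInf (Sset (n + 2)) < 1) ∧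
    ((Sset (n + 3)).Nonempty ∧ sInf (Sset (n + 3)) < sInf (Sset (n + 2)))
  | 0 => by
      have h1 : (hpoly 2).eval 1 < 0 := by norm_num [hpoly]
      obtain ⟨y, hy0, hy1, hy⟩ := exroot 2 one_pos h1
      have hne : (Sset 2).Nonempty := ⟨y, hy0, hy⟩
      have hα1 : sInf (Sset 2) < 1 :=
        lt_of_le_of_lt ((isLeast_sInf_Sset _ hne).2 ⟨hy0, hy⟩) hy1
      have hpos : 0 < (hpoly 1).eval (sInf (Sset 2)) := by norm_num [hpoly]
      exact ⟨⟨hne, hα1⟩, step_lemma 0 hne hpos⟩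
  | n + 1 => by
      obtain ⟨⟨hne2, hlt1⟩, hne3, hlt⟩ := key n
      have hL2 := isLeast_sInf_Sset _ hne2
      have hα3pos : 0 < sInf (Sset (n + 3)) := (isLeast_sInf_Sset _ hne3).1.1
      have hpos : 0 < (hpoly (n + 2)).eval (sInf (Sset (n + 3))) :=
        pos_before (n + 2) hL2 hα3pos hlt
      exact ⟨⟨hne3, hlt.trans hlt1⟩, step_lemma (n + 1) hne3 hpos⟩

/-- (i) For every `n ≥ 2`, `h_n` is an even polynomial of degree
`4n − 2` with leading coefficient `−1` and constant term `1`; (ii) for every `n ≥ 2`,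
`h_n` has a root in `(0,1)`; (iii) letting `α_n` be the smallest positive root of `h_n`,
the sequence `(α_n)_{n ≥ 2}` is strictly decreasing. -/
theorem stmt15 :
    (∀ n : ℕ, 2 ≤ n →
      (∀ k : ℕ, Odd k → (hpoly n).coeff k = 0) ∧
      (hpoly n).natDegree = 4 * n - 2 ∧
      (hpoly n).coeff (4 * n - 2) = -1 ∧
      (hpoly n).coeff 0 = 1) ∧
    (∀ n : ℕ, 2 ≤ n → ∃ x : ℝ, 0 < x ∧ x < 1 ∧ (hpoly n).eval x = 0) ∧
    (∀ n : ℕ, 2 ≤ n → ∀ a b : ℝ,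
      IsLeast {x : ℝ | 0 < x ∧ (hpoly n).eval x = 0} a →
      IsLeast {x : ℝ | 0 < x ∧ (hpoly (n + 1)).eval x = 0} b →
      b < a) := by
  refine ⟨?_, ?_, ?_⟩
  · intro n hn
    obtain ⟨m, rfl⟩ : ∃ m, n = m + 2 := ⟨n - 2, by omega⟩
    obtain ⟨hdeg, hlead⟩ := Haux_deg m
    refine ⟨?_, ?_, ?_, ?_⟩
    · intro k hk
      rw [hpoly_eq_expand, coeff_expand two_pos, if_neg]
      rw [Nat.odd_iff] at hk
      omega
    · rw [hpoly_eq_expand, natDegree_expand, hdeg]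
      omega
    · rw [hpoly_eq_expand, coeff_expand two_pos,
        if_pos (by omega : 2 ∣ 4 * (m + 2) - 2),
        show (4 * (m + 2) - 2) / 2 = 2 * m + 3 from by omega, hlead]
    · rw [hpoly_eq_expand, coeff_expand two_pos, if_pos (dvd_zero 2)]
      exact Haux_coeff_zero (m + 2)
  · intro n hn
    obtain ⟨m, rfl⟩ : ∃ m, n = m + 2 := ⟨n - 2, by omega⟩
    obtain ⟨⟨hne, hlt1⟩, _⟩ := key m
    have hL := isLeast_sInf_Sset _ hne
    exact ⟨sInf (Sset (m + 2)), hL.1.1, hlt1, hL.1.2⟩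
  · intro n hn a b ha hb
    obtain ⟨m, rfl⟩ : ∃ m, n = m + 2 := ⟨n - 2, by omega⟩
    obtain ⟨_, hne3, hlt⟩ := key m
    have hne2 : (Sset (m + 2)).Nonempty := ⟨a, ha.1⟩
    have hA : a = sInf (Sset (m + 2)) :=
      IsLeast.unique ha (isLeast_sInf_Sset _ hne2)
    have hB : b = sInf (Sset (m + 3)) :=
      IsLeast.unique hb (isLeast_sInf_Sset _ hne3)
    rw [hA, hB]
    exact hlt
end

section
/- Let G be the infinite comb: the graph with vertices {v_j, w_j : j ∈ ℕ} and edges v_j ~ w_j for all j ∈ ℕ and v_j ~ v_{j+1} for all j ∈ ℕ. For every 1 ≤ p < ∞, the shift operator S on ℓ^p(G) has no eigenvalues: if f ∈ ℓ^p(G) and Sf = λf for some λ ∈ ℂ, then f = 0. -/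
/-- Base relation for the infinite comb: `Sum.inl j` is the spine vertex `v_j` and
`Sum.inr j` is the tooth vertex `w_j`; edges are `v_j ~ v_{j+1}` and `v_j ~ w_j`. -/
def icombRel : (ℕ ⊕ ℕ) → (ℕ ⊕ ℕ) → Prop
  | Sum.inl j, Sum.inl k => k = j + 1
  | Sum.inl j, Sum.inr k => j = k
  | _, _ => False

/-- The infinite comb. -/
def icomb : SimpleGraph (ℕ ⊕ ℕ) :=
  SimpleGraph.fromRel icombRel

open Filter Topology

theorem tendsto_cofinite_zero_of_summable_norm_rpow {V E : Type*} [NormedAddCommGroup E]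
    {f : V → E} {p : ℝ} (hp : 0 < p) (h : Summable fun v => ‖f v‖ ^ p) :
    Tendsto f cofinite (𝓝 0) := by
  have hroot := h.tendsto_cofinite_zero.rpow_const (p := p⁻¹) (Or.inr (by positivity))
  rw [Real.zero_rpow (by positivity)] at hroot
  refine tendsto_zero_iff_norm_tendsto_zero.mpr (hroot.congr fun v => ?_)
  exact Real.rpow_rpow_inv (norm_nonneg _) hp.ne'

section Recurrence

variable {R : Type*} [CommRing R] {a : ℕ → R} {μ : R}

theorem casoratian_eq_of_recurrence (hrec : ∀ n, a (n + 2) = μ * a (n + 1) - a n) (n : ℕ) :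
    a (n + 1) ^ 2 - a (n + 2) * a n = a 1 ^ 2 - a 2 * a 0 := by
  induction n with
  | zero => rfl
  | succ k ih =>
    rw [← ih]
    linear_combination a (k + 2) * hrec k - a (k + 1) * hrec (k + 1)

theorem eq_zero_of_recurrence_of_tendsto_zero [TopologicalSpace R] [IsTopologicalRing R]
    [T2Space R] [NoZeroDivisors R] (hinit : a 1 = μ * a 0)
    (hrec : ∀ n, a (n + 2) = μ * a (n + 1) - a n) (hlim : Tendsto a atTop (𝓝 0)) :
    a = 0 := by
  have hcas : ∀ n, a (n + 1) ^ 2 - a (n + 2) * a n = a 0 ^ 2 := fun n => by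
    rw [casoratian_eq_of_recurrence hrec, hrec 0, hinit]
    ring
  have hcas_lim : Tendsto (fun n => a (n + 1) ^ 2 - a (n + 2) * a n) atTop (𝓝 0) := by
    have h1 := hlim.comp (tendsto_add_atTop_nat 1)
    have h2 := hlim.comp (tendsto_add_atTop_nat 2)
    simpa using (h1.pow 2).sub (h2.mul hlim)
  have ha0 : a 0 = 0 := by
    refine pow_eq_zero_iff two_ne_zero |>.mp (tendsto_nhds_unique ?_ hcas_lim)
    simpa only [hcas] using tendsto_const_nhds
  have hpair : ∀ n, a n = 0 ∧ a (n + 1) = 0 := fun n => by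
    induction n with
    | zero => exact ⟨ha0, by rw [hinit, ha0, mul_zero]⟩
    | succ k ih => exact ⟨ih.2, by rw [hrec k, ih.1, ih.2, mul_zero, sub_zero]⟩
  exact funext fun n => (hpair n).1

end Recurrence

section Comb

theorem icomb_neighborSet_inr (j : ℕ) : icomb.neighborSet (Sum.inr j) = {Sum.inl j} := by
  ext (k | k) <;> simp [icomb, icombRel, eq_comm]

theorem icomb_neighborSet_inl_zero : icomb.neighborSet (Sum.inl 0) = {Sum.inl 1, Sum.inr 0} := by
  ext (k | k) <;> simp [icomb, icombRel] <;> omega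

theorem icomb_neighborSet_inl_succ (j : ℕ) :
    icomb.neighborSet (Sum.inl (j + 1)) = {Sum.inl j, Sum.inl (j + 2), Sum.inr (j + 1)} := by
  ext (k | k) <;> simp [icomb, icombRel] <;> omega

variable (f : ℕ ⊕ ℕ → ℂ)

theorem shiftOp_icomb_inr (j : ℕ) : shiftOp icomb f (Sum.inr j) = f (Sum.inl j) := by
  rw [shiftOp, icomb_neighborSet_inr, finsum_mem_singleton]

theorem shiftOp_icomb_inl_zero :
    shiftOp icomb f (Sum.inl 0) = f (Sum.inl 1) + f (Sum.inr 0) := by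
  rw [shiftOp, icomb_neighborSet_inl_zero, finsum_mem_pair (by simp)]

theorem shiftOp_icomb_inl_succ (j : ℕ) :
    shiftOp icomb f (Sum.inl (j + 1)) =
      f (Sum.inl j) + f (Sum.inl (j + 2)) + f (Sum.inr (j + 1)) := by
  rw [shiftOp, icomb_neighborSet_inl_succ, finsum_mem_insert _ (by simp) (by simp),
    finsum_mem_pair (by simp), add_assoc]

end Comb

/-- For every `1 ≤ p < ∞`, the shift operator on `ℓ^p` of the infinite
comb has no eigenvalues: if `f ∈ ℓ^p` and `Sf = λf` for some `λ ∈ ℂ`, then `f = 0`. -/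
theorem stmt17 (p : ℝ) (hp : 1 ≤ p) (z : ℂ) (f : (ℕ ⊕ ℕ) → ℂ)
    (hf : memlp f p) (heig : ∀ x, shiftOp icomb f x = z * f x) :
    f = 0 := by
  set a : ℕ → ℂ := fun n => f (Sum.inl n)
  have htooth (j : ℕ) : a j = z * f (Sum.inr j) := (shiftOp_icomb_inr f j).symm.trans (heig _)
  have hroot : a 1 + f (Sum.inr 0) = z * a 0 := (shiftOp_icomb_inl_zero f).symm.trans (heig _)
  have hspine (j : ℕ) : a j + a (j + 2) + f (Sum.inr (j + 1)) = z * a (j + 1) :=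
    (shiftOp_icomb_inl_succ f j).symm.trans (heig _)
  have ha : a = 0 := by
    rcases eq_or_ne z 0 with rfl | hz
    · exact funext fun j => by simpa using htooth j
    have hteeth (j : ℕ) : f (Sum.inr j) = z⁻¹ * a j := by
      rw [htooth, inv_mul_cancel_left₀ hz]
    have hlim : Tendsto a atTop (𝓝 0) := by
      rw [← Nat.cofinite_eq_atTop]
      exact (tendsto_cofinite_zero_of_summable_norm_rpow (by linarith) hf).comp
        Sum.inl_injective.tendsto_cofinite
    refine eq_zero_of_recurrence_of_tendsto_zero (μ := z - z⁻¹) ?_ (fun j => ?_) hlim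
    · linear_combination hroot - hteeth 0
    · linear_combination hspine j - hteeth (j + 1)
  funext x
  rcases x with j | (_ | j)
  · exact congrFun ha j
  · simpa [ha] using hroot
  · simpa [ha] using hspine j
end
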